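/- arXiv:2009.08640 — 12 statements merged into one kernel-verified Lean document; each statement's English description precedes it below -/
import Mathlib

section
/- lim_{N→∞} (1 − e^{−H_{N−1}})^{N−1} = e^{−e^{−γ}}, where H_N is the N-th harmonic number and γ is the Euler–Mascheroni constant. (This is the key limit giving the value 1 − e^{−e^{−γ}} of the heavy-tail Poisson derivative sequence at x = ε.) -/
open Real Filter Finset Topology

private lemma slope_log_one_add :
    Tendsto (fun y : ℝ => Real.log (1 + y) / y) (𝓝[≠] (0:ℝ)) (𝓝 1) := by
  have h : HasDerivAt (fun y : ℝ => Real.log (1 + y)) 1 0 := by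
    have h1 : HasDerivAt (fun y : ℝ => 1 + y) 1 0 := (hasDerivAt_id (0:ℝ)).const_add 1
    have h2 : HasDerivAt Real.log 1⁻¹ (1 + (0:ℝ)) := by
      simpa using Real.hasDerivAt_log (one_ne_zero)
    simpa [Function.comp_def] using h2.comp 0 h1
  have := hasDerivAt_iff_tendsto_slope.mp h
  apply this.congr
  intro y
  simp [slope_def_field, div_eq_mul_inv]

private lemma key :
    Tendsto (fun n : ℕ => (1 - Real.exp (-((harmonic n : ℝ)))) ^ n)
      atTop (𝓝 (Real.exp (-Real.exp (-Real.eulerMascheroniConstant)))) := by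
  have hlog : Tendsto (fun n : ℕ => Real.log n) atTop atTop :=
    Real.tendsto_log_atTop.comp tendsto_natCast_atTop_atTop
  have hH : Tendsto (fun n : ℕ => (harmonic n : ℝ)) atTop atTop := by
    have := Real.tendsto_harmonic_sub_log.add_atTop hlog
    apply this.congr
    intro n; ring
  have hx : Tendsto (fun n : ℕ => Real.exp (-(harmonic n : ℝ))) atTop (𝓝 0) :=
    Real.tendsto_exp_atBot.comp (tendsto_neg_atTop_atBot.comp hH)
  -- h2 : n * exp(-H n) → exp(-γ)
  have h2 : Tendsto (fun n : ℕ => (n : ℝ) * Real.exp (-(harmonic n : ℝ))) atTop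
      (𝓝 (Real.exp (-Real.eulerMascheroniConstant))) := by
    have := (Real.continuous_exp.tendsto _).comp Real.tendsto_harmonic_sub_log.neg
    apply this.congr'
    filter_upwards [eventually_ge_atTop 1] with n hn
    have hn' : (0:ℝ) < n := by exact_mod_cast hn
    rw [Function.comp_apply, neg_sub, sub_eq_add_neg, Real.exp_add, Real.exp_log hn']
  -- h1 : log(1 - exp(-H n)) / (-exp(-H n)) → 1
  have h1 : Tendsto (fun n : ℕ =>
      Real.log (1 - Real.exp (-(harmonic n : ℝ))) / (-Real.exp (-(harmonic n : ℝ))))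
      atTop (𝓝 1) := by
    have hy : Tendsto (fun n : ℕ => -Real.exp (-(harmonic n : ℝ))) atTop (𝓝[≠] (0:ℝ)) := by
      rw [tendsto_nhdsWithin_iff]
      refine ⟨by simpa using hx.neg, Filter.Eventually.of_forall fun n => ?_⟩
      simp [Real.exp_ne_zero]
    have := slope_log_one_add.comp hy
    apply this.congr
    intro n
    simp [Function.comp, sub_eq_add_neg]
  -- h3 : n * log(1 - exp(-H n)) → -exp(-γ)
  have h3 : Tendsto (fun n : ℕ => (n : ℝ) * Real.log (1 - Real.exp (-(harmonic n : ℝ))))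
      atTop (𝓝 (-Real.exp (-Real.eulerMascheroniConstant))) := by
    have := (h2.mul h1).neg
    rw [mul_one] at this
    apply this.congr
    intro n
    have hne : Real.exp (-(harmonic n : ℝ)) ≠ 0 := Real.exp_ne_zero _
    field_simp
  have := (Real.continuous_exp.tendsto _).comp h3
  apply this.congr'
  filter_upwards [eventually_ge_atTop 1] with n hn
  have hpos : 0 < 1 - Real.exp (-(harmonic n : ℝ)) := by
    have : Real.exp (-(harmonic n : ℝ)) < 1 := by
      rw [Real.exp_lt_one_iff, neg_lt, neg_zero]
      exact_mod_cast harmonic_pos (by omega)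
    linarith
  rw [Function.comp_apply, Real.exp_nat_mul, Real.exp_log hpos]

/-- `lim_{N→∞} (1 - e^{-H_{N-1}})^{N-1} = e^{-e^{-γ}}`, where
`H_N = ∑_{k=1}^N 1/k` and `γ` is the Euler–Mascheroni constant. -/
theorem tendsto_one_sub_exp_neg_harmonic_pow :
    Tendsto
      (fun N : ℕ => (1 - Real.exp (-(∑ k ∈ Finset.Icc 1 (N-1), (1:ℝ)/k))) ^ (N-1))
      atTop (𝓝 (Real.exp (-Real.exp (-Real.eulerMascheroniConstant)))) := by
  have hsum : ∀ n : ℕ, (∑ k ∈ Finset.Icc 1 n, (1:ℝ)/k) = (harmonic n : ℝ) := by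
    intro n
    rw [harmonic_eq_sum_Icc]
    push_cast
    simp [one_div]
  have := key.comp (tendsto_sub_atTop_nat 1)
  apply this.congr
  intro N
  simp only [Function.comp_apply, hsum]
end

section
/- Fix ε ∈ (0,1) and for each integer N ≥ 2 set α_N = ln(1/(1−ε))/ln N. Then lim_{N→∞} ε / (1 − (N/α_N)·binom(α_N, N)·(−1)^{N−1}) = 1, where binom(α, N) = (∏_{j=0}^{N−1} (α − j))/N! is the generalized binomial coefficient. Equivalently, lim_{N→∞} (N/α_N)·binom(α_N, N)·(−1)^{N−1} = 1 − ε. (For the right-regular sequence this says lim_{N→∞} ε·λ'_{(N)}(0)·ρ'_{(N)}(1) = 1, since ε·λ'_{(N)}(0)·ρ'_{(N)}(1) = ε/(1 − (N/α_N)·binom(α_N,N)·(−1)^{N−1}).) -/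
open Real Filter Finset Topology

/-- Generalized binomial coefficient `binom(α, i) = (∏_{j=0}^{i-1} (α - j)) / i!`. -/
noncomputable def genBinom (α : ℝ) (i : ℕ) : ℝ :=
  (∏ j ∈ Finset.range i, (α - j)) / (i.factorial : ℝ)


lemma prod_neg' (M : ℕ) (f : ℕ → ℝ) :
    ∏ i ∈ Finset.range M, -f i = (-1)^M * ∏ i ∈ Finset.range M, f i := by
  calc ∏ i ∈ Finset.range M, -f i = ∏ i ∈ Finset.range M, ((-1) * f i) := by simp
  _ = (-1)^M * ∏ i ∈ Finset.range M, f i := by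
      rw [Finset.prod_mul_distrib, Finset.prod_const, Finset.card_range]

lemma hlow : ∀ M : ℕ, Real.log ((M:ℝ)+1) ≤ ∑ j ∈ Finset.range M, (1:ℝ)/((j:ℝ)+1) := by
  intro M
  induction M with
  | zero => simp
  | succ K ih =>
    rw [Finset.sum_range_succ]
    have key : Real.log ((K:ℝ)+2) - Real.log ((K:ℝ)+1) ≤ 1/((K:ℝ)+1) := by
      have h := Real.log_le_sub_one_of_pos (show (0:ℝ) < ((K:ℝ)+2)/((K:ℝ)+1) by positivity)
      rw [Real.log_div (by positivity) (by positivity)] at h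
      have e : ((K:ℝ)+2)/((K:ℝ)+1) - 1 = 1/((K:ℝ)+1) := by
        field_simp; norm_num
      linarith
    push_cast
    rw [show ((K:ℝ)+1+1) = ((K:ℝ)+2) from by ring]
    linarith

lemma hup_aux : ∀ M : ℕ, ∑ j ∈ Finset.range M, (1:ℝ)/((j:ℝ)+2) ≤ Real.log ((M:ℝ)+1) := by
  intro M
  induction M with
  | zero => simp
  | succ K ih =>
    rw [Finset.sum_range_succ]
    have key : 1/((K:ℝ)+2) ≤ Real.log ((K:ℝ)+2) - Real.log ((K:ℝ)+1) := by
      have h := Real.one_sub_inv_le_log_of_pos (show (0:ℝ) < ((K:ℝ)+2)/((K:ℝ)+1) by positivity)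
      rw [Real.log_div (by positivity) (by positivity)] at h
      have e : 1 - (((K:ℝ)+2)/((K:ℝ)+1))⁻¹ = 1/((K:ℝ)+2) := by
        rw [inv_div]; field_simp; norm_num
      linarith
    push_cast
    rw [show ((K:ℝ)+1+1) = ((K:ℝ)+2) from by ring]
    linarith

lemma hup (M : ℕ) : ∑ j ∈ Finset.range M, (1:ℝ)/((j:ℝ)+1) ≤ 1 + Real.log ((M:ℝ)+1) := by
  cases M with
  | zero => simp
  | succ K =>
    rw [Finset.sum_range_succ' (fun j => (1:ℝ)/((j:ℝ)+1)) K]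
    have h := hup_aux K
    have h2 : Real.log ((K:ℝ)+1) ≤ Real.log ((K:ℝ)+1+1) :=
      Real.log_le_log (by positivity) (by linarith)
    have e : ∑ j ∈ Finset.range K, (1:ℝ)/(((j+1:ℕ):ℝ)+1) = ∑ j ∈ Finset.range K, (1:ℝ)/((j:ℝ)+2) :=
      Finset.sum_congr rfl fun j _ => by push_cast; ring_nf
    push_cast
    push_cast at e
    rw [e]
    push_cast at h2
    linarith

lemma hsq : ∀ M : ℕ, ∑ j ∈ Finset.range M, (1:ℝ)/((j:ℝ)+1)^2 ≤ 2 - 2/((M:ℝ)+1) := by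
  intro M
  induction M with
  | zero => norm_num
  | succ K ih =>
    rw [Finset.sum_range_succ]
    have h1 : (0:ℝ) < (K:ℝ)+1 := by positivity
    have h2 : (0:ℝ) < (K:ℝ)+2 := by positivity
    have key : 1/((K:ℝ)+1)^2 ≤ 2/((K:ℝ)+1) - 2/((K:ℝ)+2) := by
      rw [div_sub_div _ _ (ne_of_gt h1) (ne_of_gt h2), div_le_div_iff₀ (by positivity) (by positivity)]
      nlinarith [sq_nonneg ((K:ℝ)+1)]
    push_cast
    rw [show ((K:ℝ)+1+1) = ((K:ℝ)+2) from by ring]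
    linarith

lemma log_one_sub_le {x : ℝ} (h1 : x ≤ 1/2) : Real.log (1 - x) ≤ -x := by
  have h := Real.log_le_sub_one_of_pos (show (0:ℝ) < 1 - x by linarith)
  linarith

lemma le_log_one_sub {x : ℝ} (h0 : 0 ≤ x) (h1 : x ≤ 1/2) : -x - 2*x^2 ≤ Real.log (1 - x) := by
  have hx : (0:ℝ) < 1 - x := by linarith
  have h := Real.one_sub_inv_le_log_of_pos hx
  have h3 : (1-x)⁻¹ ≤ 1+x+2*x^2 := by
    rw [inv_eq_one_div, div_le_iff₀ hx]; nlinarith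
  linarith

lemma genBinom_identity (a : ℝ) (ha : a ≠ 0) (N : ℕ) (hN : 1 ≤ N) :
    ((N:ℝ) / a) * genBinom a N * (-1:ℝ)^(N-1)
      = ∏ j ∈ Finset.range (N-1), (1 - a/(j+1)) := by
  obtain ⟨M, rfl⟩ : ∃ M, N = M + 1 := ⟨N - 1, (Nat.succ_pred_eq_of_pos hN).symm⟩
  simp only [Nat.add_sub_cancel]
  have h1 : genBinom a (M+1) = (∏ j ∈ Finset.range M, (a - (j+1))) * a / ((M+1).factorial : ℝ) := by
    rw [genBinom, Finset.prod_range_succ']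
    push_cast
    ring_nf
  have hfac : ((M+1).factorial : ℝ) = (M+1) * (M.factorial : ℝ) := by
    rw [Nat.factorial_succ]; push_cast; ring
  have h2 : ∏ j ∈ Finset.range M, (1 - a/((j:ℝ)+1))
      = (∏ j ∈ Finset.range M, ((j:ℝ)+1-a)) / (M.factorial : ℝ) := by
    rw [← (by exact_mod_cast congrArg (Nat.cast : ℕ → ℝ) (Finset.prod_range_add_one_eq_factorial M)
          : (∏ x ∈ Finset.range M, ((x:ℝ) + 1)) = (Nat.factorial M : ℝ)),
        ← Finset.prod_div_distrib]
    refine Finset.prod_congr rfl fun j _ => ?_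
    have : ((j:ℝ)+1) ≠ 0 := by positivity
    field_simp
  have h3 : ∏ j ∈ Finset.range M, ((j:ℝ)+1-a)
      = (-1)^M * ∏ j ∈ Finset.range M, (a - ((j:ℝ)+1)) := by
    rw [← prod_neg' M (fun j => a - ((j:ℝ)+1))]
    refine Finset.prod_congr rfl fun j _ => by ring
  have hMfac : (M.factorial : ℝ) ≠ 0 := by exact_mod_cast M.factorial_ne_zero
  have hsq : ((-1:ℝ)^M)^2 = 1 := by
    rw [← pow_mul, mul_comm, pow_mul]; simp
  rw [h1, h2, h3, hfac]
  push_cast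
  field_simp

/-- with `α_N = ln(1/(1-ε))/ln N`, we have
`lim_{N→∞} ε / (1 - (N/α_N)·binom(α_N,N)·(-1)^{N-1}) = 1`, equivalently
`lim_{N→∞} (N/α_N)·binom(α_N,N)·(-1)^{N-1} = 1 - ε`. -/
theorem rightRegular_deriv_zero_limit (ε : ℝ) (hε : ε ∈ Set.Ioo (0:ℝ) 1) :
    Tendsto
      (fun N : ℕ => ε /
        (1 - ((N : ℝ) / (Real.log (1/(1-ε)) / Real.log N))
          * genBinom (Real.log (1/(1-ε)) / Real.log N) N * (-1:ℝ)^(N-1)))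
      atTop (𝓝 1)
    ∧
    Tendsto
      (fun N : ℕ => ((N : ℝ) / (Real.log (1/(1-ε)) / Real.log N))
        * genBinom (Real.log (1/(1-ε)) / Real.log N) N * (-1:ℝ)^(N-1))
      atTop (𝓝 (1 - ε)) := by
  obtain ⟨hε0, hε1⟩ := hε
  have h1ε : (0:ℝ) < 1 - ε := by linarith
  set L := Real.log (1/(1-ε)) with hLdef
  have hL : 0 < L := Real.log_pos (by rw [lt_div_iff₀ h1ε]; linarith)
  have hLneg : -L = Real.log (1-ε) := by
    rw [hLdef, one_div, Real.log_inv, neg_neg]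
  have ha0 : Tendsto (fun N : ℕ => L / Real.log N) atTop (𝓝 0) :=
    Tendsto.div_atTop tendsto_const_nhds
      (Real.tendsto_log_atTop.comp tendsto_natCast_atTop_atTop)
  have hev : ∀ᶠ N : ℕ in atTop,
      0 < L / Real.log N ∧ L / Real.log N ≤ 1/2 ∧ 2 ≤ N ∧ 0 < Real.log N := by
    have h1 : ∀ᶠ N : ℕ in atTop, L / Real.log N ≤ 1/2 :=
      ha0.eventually (eventually_le_nhds (by norm_num))
    filter_upwards [h1, eventually_ge_atTop 2] with N hN2 hN
    have hlogN : 0 < Real.log N := Real.log_pos (by exact_mod_cast Nat.lt_of_lt_of_le one_lt_two hN)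
    exact ⟨div_pos hL hlogN, hN2, hN, hlogN⟩
  -- sum limit
  have hsumlim : Tendsto
      (fun N : ℕ => ∑ j ∈ Finset.range (N-1), Real.log (1 - (L / Real.log N)/((j:ℝ)+1)))
      atTop (𝓝 (-L)) := by
    apply tendsto_of_tendsto_of_tendsto_of_le_of_le'
      (g := fun N : ℕ => -L - (L / Real.log N) - 4*(L / Real.log N)^2)
      (h := fun _ : ℕ => (-L : ℝ))
    · have : Tendsto (fun N : ℕ => -L - (L / Real.log N) - 4*(L / Real.log N)^2)
          atTop (𝓝 (-L - 0 - 4*0^2)) :=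
        (tendsto_const_nhds.sub ha0).sub (((ha0.pow 2)).const_mul 4)
      simpa using this
    · exact tendsto_const_nhds
    · -- lower
      filter_upwards [hev] with N hN
      obtain ⟨haP, haH, hN2, hlogN⟩ := hN
      set aN := L / Real.log N with haN
      have hcast : ((N-1:ℕ):ℝ) + 1 = (N:ℝ) := by
        rw [Nat.cast_sub (by omega)]; push_cast; ring
      have hH1 := hlow (N-1); have hH2 := hup (N-1); have hT := hsq (N-1)
      rw [hcast] at hH1 hH2
      have hmul : aN * Real.log N = L := div_mul_cancel₀ L (ne_of_gt hlogN)
      have step : ∀ j ∈ Finset.range (N-1),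
          (-aN)*(1/((j:ℝ)+1)) - 2*aN^2*(1/((j:ℝ)+1)^2) ≤ Real.log (1 - aN/((j:ℝ)+1)) := by
        intro j _
        have hj : (0:ℝ) < (j:ℝ)+1 := by positivity
        have hx0 : 0 ≤ aN/((j:ℝ)+1) := by positivity
        have hx1 : aN/((j:ℝ)+1) ≤ 1/2 :=
          le_trans (div_le_self (le_of_lt haP) (by linarith)) haH
        have h := le_log_one_sub hx0 hx1
        have e : (-aN)*(1/((j:ℝ)+1)) - 2*aN^2*(1/((j:ℝ)+1)^2)
            = -(aN/((j:ℝ)+1)) - 2*(aN/((j:ℝ)+1))^2 := by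
          have hj' : ((j:ℝ)+1) ≠ 0 := ne_of_gt hj
          field_simp
        rw [e]; exact h
      have hsum_le := Finset.sum_le_sum step
      have hsum_eq : ∑ j ∈ Finset.range (N-1),
            ((-aN)*(1/((j:ℝ)+1)) - 2*aN^2*(1/((j:ℝ)+1)^2))
          = (-aN) * (∑ j ∈ Finset.range (N-1), (1:ℝ)/((j:ℝ)+1))
            - 2*aN^2 * (∑ j ∈ Finset.range (N-1), (1:ℝ)/((j:ℝ)+1)^2) := by
        rw [Finset.sum_sub_distrib, ← Finset.mul_sum, ← Finset.mul_sum]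
      rw [hsum_eq] at hsum_le
      have hb1 : aN * (∑ j ∈ Finset.range (N-1), (1:ℝ)/((j:ℝ)+1)) ≤ aN * (1 + Real.log N) :=
        mul_le_mul_of_nonneg_left hH2 (le_of_lt haP)
      have hTle : (∑ j ∈ Finset.range (N-1), (1:ℝ)/((j:ℝ)+1)^2) ≤ 2 := by
        have : (0:ℝ) < ((N-1:ℕ):ℝ)+1 := by positivity
        have h2 : 0 < 2/(((N-1:ℕ):ℝ)+1) := by positivity
        linarith
      have hb2 : aN^2 * (∑ j ∈ Finset.range (N-1), (1:ℝ)/((j:ℝ)+1)^2) ≤ aN^2 * 2 :=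
        mul_le_mul_of_nonneg_left hTle (sq_nonneg _)
      nlinarith
    · -- upper
      filter_upwards [hev] with N hN
      obtain ⟨haP, haH, hN2, hlogN⟩ := hN
      set aN := L / Real.log N with haN
      have hcast : ((N-1:ℕ):ℝ) + 1 = (N:ℝ) := by
        rw [Nat.cast_sub (by omega)]; push_cast; ring
      have hH1 := hlow (N-1)
      rw [hcast] at hH1
      have hmul : aN * Real.log N = L := div_mul_cancel₀ L (ne_of_gt hlogN)
      have step : ∀ j ∈ Finset.range (N-1),
          Real.log (1 - aN/((j:ℝ)+1)) ≤ (-aN)*(1/((j:ℝ)+1)) := by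
        intro j _
        have hj : (0:ℝ) < (j:ℝ)+1 := by positivity
        have hx1 : aN/((j:ℝ)+1) ≤ 1/2 :=
          le_trans (div_le_self (le_of_lt haP) (by linarith)) haH
        have h := log_one_sub_le hx1
        have e : (-aN)*(1/((j:ℝ)+1)) = -(aN/((j:ℝ)+1)) := by ring
        rw [e]; exact h
      have hsum_le := Finset.sum_le_sum step
      have hsum_eq : ∑ j ∈ Finset.range (N-1), ((-aN)*(1/((j:ℝ)+1)))
          = (-aN) * (∑ j ∈ Finset.range (N-1), (1:ℝ)/((j:ℝ)+1)) := by
        rw [← Finset.mul_sum]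
      rw [hsum_eq] at hsum_le
      have hb1 : aN * Real.log N ≤ aN * (∑ j ∈ Finset.range (N-1), (1:ℝ)/((j:ℝ)+1)) :=
        mul_le_mul_of_nonneg_left hH1 (le_of_lt haP)
      nlinarith
  -- product limit
  have hprod : Tendsto
      (fun N : ℕ => ∏ j ∈ Finset.range (N-1), (1 - (L / Real.log N)/((j:ℝ)+1)))
      atTop (𝓝 (1-ε)) := by
    have hexp : Tendsto
        (fun N : ℕ => Real.exp (∑ j ∈ Finset.range (N-1),
          Real.log (1 - (L / Real.log N)/((j:ℝ)+1)))) atTop (𝓝 (Real.exp (-L))) :=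
      (Real.continuous_exp.tendsto _).comp hsumlim
    rw [hLneg, Real.exp_log h1ε] at hexp
    apply hexp.congr'
    filter_upwards [hev] with N hN
    obtain ⟨haP, haH, hN2, hlogN⟩ := hN
    rw [Real.exp_sum]
    refine Finset.prod_congr rfl fun j _ => ?_
    apply Real.exp_log
    have hj : (0:ℝ) < (j:ℝ)+1 := by positivity
    have hx1 : (L / Real.log N)/((j:ℝ)+1) ≤ 1/2 :=
      le_trans (div_le_self (le_of_lt haP) (by linarith)) haH
    linarith
  have key : Tendsto
      (fun N : ℕ => ((N : ℝ) / (L / Real.log N))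
        * genBinom (L / Real.log N) N * (-1:ℝ)^(N-1)) atTop (𝓝 (1 - ε)) := by
    apply hprod.congr'
    filter_upwards [hev] with N hN
    obtain ⟨haP, haH, hN2, hlogN⟩ := hN
    exact (genBinom_identity (L / Real.log N) (ne_of_gt haP) N (by omega)).symm
  refine ⟨?_, key⟩
  have h2 : Tendsto
      (fun N : ℕ => 1 - ((N : ℝ) / (L / Real.log N))
        * genBinom (L / Real.log N) N * (-1:ℝ)^(N-1)) atTop (𝓝 ε) := by
    have := tendsto_const_nhds.sub key (f := fun _ : ℕ => (1:ℝ))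
    simpa using this
  have := Tendsto.div (tendsto_const_nhds (x := ε) (f := atTop (α := ℕ))) h2 (ne_of_gt hε0)
  rw [div_self (ne_of_gt hε0)] at this
  exact this
end

section
/- Fix ε ∈ (0,1) and for each integer N ≥ 2 set α_N = ln(1/(1−ε))/ln N. For the right-regular sequence, the fraction of degree-two variable nodes from a node perspective equals L_2^{(N)} = (α_N/2) / (Σ_{i=1}^{N−1} (−1)^{i−1} binom(α_N, i)/(i+1)). Then 1/ln(9 e^{4/3}/4) ≤ liminf_{N→∞} L_2^{(N)} ≤ limsup_{N→∞} L_2^{(N)} ≤ 1/ln(9e/4), and these bounds hold for every ε ∈ (0,1). -/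
open Real Filter Finset Topology

lemma prod_range_cast_add_one (n : ℕ) :
    ∏ j ∈ Finset.range n, ((j:ℝ)+1) = n.factorial := by
  induction n with
  | zero => simp
  | succ n ih =>
      rw [Finset.prod_range_succ, ih]
      push_cast [Nat.factorial_succ]
      ring

lemma genBinom_alt (α : ℝ) (k : ℕ) :
    (-1:ℝ)^k * genBinom α (k+1)
      = α * (∏ j ∈ Finset.range k, ((j:ℝ)+1 - α)) / ((k+1).factorial : ℝ) := by
  induction k with
  | zero => simp [genBinom]
  | succ k ih =>
      have hfac : ((k+1).factorial : ℝ) ≠ 0 := by positivity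
      have hf2 : ((k+2).factorial : ℝ) = ((k:ℝ)+2) * ((k+1).factorial : ℝ) := by
        rw [show (k+2).factorial = (k+2) * (k+1).factorial from rfl]
        push_cast; ring
      have h1 : genBinom α (k+2) = genBinom α (k+1) * (α - ((k:ℝ)+1)) / ((k:ℝ)+2) := by
        simp only [genBinom, Finset.prod_range_succ, hf2]
        push_cast
        rw [div_mul_eq_mul_div, div_div]
        rw [mul_comm ((k:ℝ)+2)]
      have key : (-1:ℝ)^(k+1) * genBinom α (k+2)
          = ((-1:ℝ)^k * genBinom α (k+1)) * (((k:ℝ)+1-α)/((k:ℝ)+2)) := by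
        rw [h1]; ring
      rw [show k+1+1 = k+2 from rfl, key, ih, Finset.prod_range_succ, hf2]
      push_cast
      field_simp

lemma term_bounds (α : ℝ) (h0 : 0 < α) (h1 : α < 1) (k : ℕ) :
    α * (1 - (k:ℝ)*α) / (((k:ℝ)+1)*((k:ℝ)+2)) ≤ (-1:ℝ)^k * genBinom α (k+1) / ((k:ℝ)+2)
    ∧ (-1:ℝ)^k * genBinom α (k+1) / ((k:ℝ)+2) ≤ α / (((k:ℝ)+1)*((k:ℝ)+2))
    ∧ 0 < (-1:ℝ)^k * genBinom α (k+1) / ((k:ℝ)+2) := by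
  set P : ℝ := ∏ j ∈ Finset.range k, ((j:ℝ)+1 - α) with hPdef
  set F : ℝ := (k.factorial : ℝ) with hFdef
  have hF : 0 < F := by positivity
  have hfac1 : ((k+1).factorial : ℝ) = ((k:ℝ)+1) * F := by
    rw [hFdef, show (k+1).factorial = (k+1) * k.factorial from rfl]; push_cast; ring
  have ht : (-1:ℝ)^k * genBinom α (k+1) / ((k:ℝ)+2) = α * P / ((((k:ℝ)+1) * F) * ((k:ℝ)+2)) := by
    rw [genBinom_alt, hfac1, div_div]
  have hP0 : 0 < P := by
    apply Finset.prod_pos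
    intro j hj
    have : (0:ℝ) ≤ j := Nat.cast_nonneg j
    linarith
  have hPF : P ≤ F := by
    rw [hFdef, ← prod_range_cast_add_one]
    apply Finset.prod_le_prod
    · intro j hj; have : (0:ℝ) ≤ j := Nat.cast_nonneg j; linarith
    · intro j hj; linarith
  have hbern : 1 - (k:ℝ)*α ≤ (1-α)^k := by
    have := one_add_mul_le_pow (a := -α) (by linarith) k
    calc 1 - (k:ℝ)*α = 1 + (k:ℝ)*(-α) := by ring
    _ ≤ (1 + (-α))^k := this
    _ = (1-α)^k := by ring_nf
  have hPlow : F * (1 - (k:ℝ)*α) ≤ P := by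
    have step1 : F * (1-α)^k ≤ P := by
      have : ∏ j ∈ Finset.range k, (((j:ℝ)+1) * (1-α)) ≤ P := by
        apply Finset.prod_le_prod
        · intro j hj; have : (0:ℝ) ≤ j := Nat.cast_nonneg j; nlinarith
        · intro j hj; have : (0:ℝ) ≤ j := Nat.cast_nonneg j; nlinarith
      calc F * (1-α)^k = (∏ j ∈ Finset.range k, ((j:ℝ)+1)) * ∏ _j ∈ Finset.range k, (1-α) := by
            rw [prod_range_cast_add_one, Finset.prod_const, Finset.card_range]
      _ = ∏ j ∈ Finset.range k, (((j:ℝ)+1) * (1-α)) := by rw [← Finset.prod_mul_distrib]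
      _ ≤ P := this
    nlinarith
  have hk1 : (0:ℝ) < (k:ℝ)+1 := by positivity
  have hk2 : (0:ℝ) < (k:ℝ)+2 := by positivity
  refine ⟨?_, ?_, ?_⟩
  · rw [ht, div_le_div_iff₀ (by positivity) (by positivity)]
    nlinarith [mul_le_mul_of_nonneg_left hPlow h0.le, mul_pos hk1 hk2]
  · rw [ht, div_le_div_iff₀ (by positivity) (by positivity)]
    nlinarith [mul_le_mul_of_nonneg_left hPF h0.le, mul_pos hk1 hk2]
  · rw [ht]; positivity

lemma tele (n : ℕ) :
    ∑ k ∈ Finset.range n, (1:ℝ)/(((k:ℝ)+1)*((k:ℝ)+2)) = 1 - 1/((n:ℝ)+1) := by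
  induction n with
  | zero => simp
  | succ n ih =>
      rw [Finset.sum_range_succ, ih]
      have h1 : ((n:ℝ)+1) ≠ 0 := by positivity
      have h2 : ((n:ℝ)+2) ≠ 0 := by positivity
      push_cast
      field_simp
      ring

lemma sum_upper (α : ℝ) (h0 : 0 < α) (h1 : α < 1) (n : ℕ) :
    ∑ k ∈ Finset.range n, (-1:ℝ)^k * genBinom α (k+1) / ((k:ℝ)+2) ≤ α := by
  calc ∑ k ∈ Finset.range n, (-1:ℝ)^k * genBinom α (k+1) / ((k:ℝ)+2)
      ≤ ∑ k ∈ Finset.range n, α * (1/(((k:ℝ)+1)*((k:ℝ)+2))) := by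
        apply Finset.sum_le_sum
        intro k hk
        have := (term_bounds α h0 h1 k).2.1
        rw [mul_one_div]
        exact this
  _ = α * (1 - 1/((n:ℝ)+1)) := by rw [← Finset.mul_sum, tele]
  _ ≤ α := by
        have : (0:ℝ) < (n:ℝ)+1 := by positivity
        nlinarith [div_nonneg (zero_le_one) this.le]

lemma sum_pos' (α : ℝ) (h0 : 0 < α) (h1 : α < 1) (n : ℕ) (hn : 1 ≤ n) :
    0 < ∑ k ∈ Finset.range n, (-1:ℝ)^k * genBinom α (k+1) / ((k:ℝ)+2) := by
  apply Finset.sum_pos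
  · intro k hk; exact (term_bounds α h0 h1 k).2.2
  · exact Finset.nonempty_range_iff.mpr (by omega)

lemma sum_lower (α : ℝ) (h0 : 0 < α) (h1 : α < 1) (M n : ℕ) (hMn : M ≤ n) :
    α * (1 - 1/((M:ℝ)+1) - α*(M:ℝ)^2)
      ≤ ∑ k ∈ Finset.range n, (-1:ℝ)^k * genBinom α (k+1) / ((k:ℝ)+2) := by
  have step0 : ∑ k ∈ Finset.range M, (-1:ℝ)^k * genBinom α (k+1) / ((k:ℝ)+2)
      ≤ ∑ k ∈ Finset.range n, (-1:ℝ)^k * genBinom α (k+1) / ((k:ℝ)+2) := by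
    apply Finset.sum_le_sum_of_subset_of_nonneg (Finset.range_subset_range.mpr hMn)
    intro k _ _
    exact ((term_bounds α h0 h1 k).2.2).le
  have step1 : ∀ k ∈ Finset.range M,
      α * (1/(((k:ℝ)+1)*((k:ℝ)+2))) - α^2*(k:ℝ) ≤ (-1:ℝ)^k * genBinom α (k+1) / ((k:ℝ)+2) := by
    intro k hk
    have hlow := (term_bounds α h0 h1 k).1
    have hD : (1:ℝ) ≤ ((k:ℝ)+1)*((k:ℝ)+2) := by nlinarith [Nat.cast_nonneg (α := ℝ) k]
    have hDpos : (0:ℝ) < ((k:ℝ)+1)*((k:ℝ)+2) := by positivity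
    have heq : α * (1 - (k:ℝ)*α) / (((k:ℝ)+1)*((k:ℝ)+2))
        = α * (1/(((k:ℝ)+1)*((k:ℝ)+2))) - (α^2*(k:ℝ))/(((k:ℝ)+1)*((k:ℝ)+2)) := by
      field_simp
    have hds : (α^2*(k:ℝ))/(((k:ℝ)+1)*((k:ℝ)+2)) ≤ α^2*(k:ℝ) :=
      div_le_self (by positivity) hD
    linarith
  have step2 : ∑ k ∈ Finset.range M, (α * (1/(((k:ℝ)+1)*((k:ℝ)+2))) - α^2*(k:ℝ))
      ≤ ∑ k ∈ Finset.range M, (-1:ℝ)^k * genBinom α (k+1) / ((k:ℝ)+2) :=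
    Finset.sum_le_sum step1
  have step3 : ∑ k ∈ Finset.range M, (α * (1/(((k:ℝ)+1)*((k:ℝ)+2))) - α^2*(k:ℝ))
      = α * (1 - 1/((M:ℝ)+1)) - α^2 * ∑ k ∈ Finset.range M, (k:ℝ) := by
    rw [Finset.sum_sub_distrib, ← Finset.mul_sum, tele, ← Finset.mul_sum]
  have step4 : ∑ k ∈ Finset.range M, (k:ℝ) ≤ (M:ℝ)^2 := by
    calc ∑ k ∈ Finset.range M, (k:ℝ) ≤ ∑ _k ∈ Finset.range M, (M:ℝ) := by
          apply Finset.sum_le_sum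
          intro k hk
          exact_mod_cast (Finset.mem_range.mp hk).le
    _ = (M:ℝ) * (M:ℝ) := by rw [Finset.sum_const, Finset.card_range]; ring
    _ = (M:ℝ)^2 := by ring
  have hα2 : (0:ℝ) ≤ α^2 := sq_nonneg α
  nlinarith [mul_le_mul_of_nonneg_left step4 hα2]

lemma num_upper : (1/2:ℝ) ≤ 1 / Real.log (9 * Real.exp 1 / 4) := by
  have he : (2.7182818283 : ℝ) < Real.exp 1 := Real.exp_one_gt_d9
  have he' : Real.exp 1 < 2.7182818286 := Real.exp_one_lt_d9
  have hx : (1:ℝ) < 9 * Real.exp 1 / 4 := by nlinarith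
  have hpos : 0 < Real.log (9 * Real.exp 1 / 4) := Real.log_pos hx
  have hle : Real.log (9 * Real.exp 1 / 4) ≤ 2 := by
    rw [Real.log_le_iff_le_exp (by positivity)]
    have h2 : Real.exp 2 = Real.exp 1 * Real.exp 1 := by rw [← Real.exp_add]; norm_num
    nlinarith
  have := one_div_le_one_div_of_le hpos hle
  linarith

lemma num_lower : 1 / Real.log (9 * Real.exp (4/3) / 4) ≤ (1/2:ℝ) := by
  set u := Real.exp (2/3 : ℝ) with hu
  have hu0 : 0 < u := Real.exp_pos _
  have he' : Real.exp 1 < 2.7182818286 := Real.exp_one_lt_d9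
  have he0 : 0 < Real.exp 1 := Real.exp_pos 1
  have hu3 : u^3 = Real.exp 2 := by
    rw [hu, ← Real.exp_nat_mul]; norm_num
  have h2 : Real.exp 2 = Real.exp 1 * Real.exp 1 := by rw [← Real.exp_add]; norm_num
  have hucube : u^3 < (9/4:ℝ)^3 := by rw [hu3, h2]; nlinarith
  have huu : u < 9/4 := lt_of_pow_lt_pow_left₀ 3 (by norm_num) hucube
  have h43 : Real.exp (4/3 : ℝ) = u * u := by rw [hu, ← Real.exp_add]; norm_num
  have hge : 2 ≤ Real.log (9 * Real.exp (4/3) / 4) := by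
    rw [Real.le_log_iff_exp_le (by positivity)]
    rw [show (2:ℝ) = 2/3 + 4/3 by norm_num, Real.exp_add, h43, ← hu]
    nlinarith
  have := one_div_le_one_div_of_le (by norm_num : (0:ℝ) < 2) hge
  linarith

lemma sum_Icc_eq (β : ℝ) (N : ℕ) :
    ∑ i ∈ Finset.Icc 1 (N-1), (-1:ℝ)^(i-1) * genBinom β i / ((i:ℝ)+1)
      = ∑ k ∈ Finset.range (N-1), (-1:ℝ)^k * genBinom β (k+1) / ((k:ℝ)+2) := by
  rw [← Finset.Ico_add_one_right_eq_Icc, Finset.sum_Ico_eq_sum_range]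
  rw [show N - 1 + 1 - 1 = N - 1 by omega]
  apply Finset.sum_congr rfl
  intro k _
  rw [show 1 + k - 1 = k by omega, show 1 + k = k + 1 by omega]
  push_cast
  ring_nf

lemma main_tendsto (c : ℝ) (hc : 0 < c) :
    Filter.Tendsto (fun N : ℕ => ((c / Real.log N) / 2) /
        (∑ i ∈ Finset.Icc 1 (N-1),
          (-1:ℝ)^(i-1) * genBinom (c / Real.log N) i / ((i:ℝ)+1)))
      Filter.atTop (𝓝 (1/2)) := by
  set α : ℕ → ℝ := fun N => c / Real.log N with hαdef
  set S : ℕ → ℝ := fun N =>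
    ∑ k ∈ Finset.range (N-1), (-1:ℝ)^k * genBinom (α N) (k+1) / ((k:ℝ)+2) with hSdef
  have hlog : Tendsto (fun N : ℕ => Real.log N) atTop atTop :=
    Real.tendsto_log_atTop.comp tendsto_natCast_atTop_atTop
  have hα0 : Tendsto α atTop (𝓝 0) := Tendsto.div_atTop tendsto_const_nhds hlog
  have hαpos : ∀ᶠ N : ℕ in atTop, 0 < α N := by
    filter_upwards [eventually_ge_atTop 2] with N hN
    have : (1:ℝ) < N := by exact_mod_cast Nat.lt_of_lt_of_le one_lt_two hN
    exact div_pos hc (Real.log_pos this)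
  have hα1 : ∀ᶠ N : ℕ in atTop, α N < 1 := hα0.eventually_lt_const (by norm_num)
  -- S N / α N → 1
  have hr : Tendsto (fun N => S N / α N) atTop (𝓝 1) := by
    rw [Metric.tendsto_nhds]
    intro δ hδ
    obtain ⟨M, hM⟩ := exists_nat_gt (2/δ)
    have hM2 : 1/((M:ℝ)+1) < δ/2 := by
      rw [div_lt_div_iff₀ (by positivity) (by norm_num)]
      have h2 : 2 < (M:ℝ)*δ := (div_lt_iff₀ hδ).mp hM
      nlinarith
    have hE4 : ∀ᶠ N : ℕ in atTop, α N * (M:ℝ)^2 < δ/2 := by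
      have : Tendsto (fun N => α N * (M:ℝ)^2) atTop (𝓝 0) := by
        simpa using hα0.mul_const ((M:ℝ)^2)
      exact this.eventually_lt_const (by positivity)
    filter_upwards [hαpos, hα1, eventually_ge_atTop (M+1), hE4] with N h1 h2 h3 h4
    have hMN : M ≤ N - 1 := by omega
    have hup : S N ≤ α N := sum_upper (α N) h1 h2 (N-1)
    have hlo : α N * (1 - 1/((M:ℝ)+1) - (α N)*(M:ℝ)^2) ≤ S N :=
      sum_lower (α N) h1 h2 M (N-1) hMN
    have hrle : S N / α N ≤ 1 := (div_le_one h1).mpr hup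
    have hrge : 1 - 1/((M:ℝ)+1) - (α N)*(M:ℝ)^2 ≤ S N / α N := by
      rw [le_div_iff₀ h1]
      calc (1 - 1/((M:ℝ)+1) - (α N)*(M:ℝ)^2) * α N
          = α N * (1 - 1/((M:ℝ)+1) - (α N)*(M:ℝ)^2) := by ring
      _ ≤ S N := hlo
    rw [Real.dist_eq, abs_lt]
    constructor <;> [linarith; linarith]
  -- conclude
  have htend : Tendsto (fun N => (1/2:ℝ) / (S N / α N)) atTop (𝓝 ((1/2:ℝ)/1)) :=
    tendsto_const_nhds.div hr one_ne_zero
  rw [div_one] at htend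
  apply Tendsto.congr' _ htend
  filter_upwards [hαpos, hα1, eventually_ge_atTop 2] with N h1 h2 hN
  have hS : 0 < S N := sum_pos' (α N) h1 h2 (N-1) (by omega)
  rw [sum_Icc_eq]
  show (1/2:ℝ) / (S N / α N) = (α N / 2) / S N
  rw [div_div_eq_mul_div, div_div]
  field_simp

/-- for the right-regular sequence with `α_N = ln(1/(1-ε))/ln N`, the
fraction of degree-two variable nodes from a node perspective
`L_2^{(N)} = (α_N/2) / (∑_{i=1}^{N-1} (-1)^{i-1} binom(α_N,i)/(i+1))` satisfies
`1/ln(9 e^{4/3}/4) ≤ liminf L_2^{(N)} ≤ limsup L_2^{(N)} ≤ 1/ln(9e/4)`. -/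
theorem rightRegular_L2_bounds (ε : ℝ) (hε : ε ∈ Set.Ioo (0:ℝ) 1) :
    1 / Real.log (9 * Real.exp (4/3) / 4) ≤
      Filter.liminf
        (fun N : ℕ => ((Real.log (1/(1-ε)) / Real.log N) / 2) /
          (∑ i ∈ Finset.Icc 1 (N-1),
            (-1:ℝ)^(i-1) * genBinom (Real.log (1/(1-ε)) / Real.log N) i / (i+1)))
        Filter.atTop
    ∧
    Filter.liminf
        (fun N : ℕ => ((Real.log (1/(1-ε)) / Real.log N) / 2) /
          (∑ i ∈ Finset.Icc 1 (N-1),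
            (-1:ℝ)^(i-1) * genBinom (Real.log (1/(1-ε)) / Real.log N) i / (i+1)))
        Filter.atTop ≤
      Filter.limsup
        (fun N : ℕ => ((Real.log (1/(1-ε)) / Real.log N) / 2) /
          (∑ i ∈ Finset.Icc 1 (N-1),
            (-1:ℝ)^(i-1) * genBinom (Real.log (1/(1-ε)) / Real.log N) i / (i+1)))
        Filter.atTop
    ∧
    Filter.limsup
        (fun N : ℕ => ((Real.log (1/(1-ε)) / Real.log N) / 2) /
          (∑ i ∈ Finset.Icc 1 (N-1),
            (-1:ℝ)^(i-1) * genBinom (Real.log (1/(1-ε)) / Real.log N) i / (i+1)))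
        Filter.atTop ≤ 1 / Real.log (9 * Real.exp 1 / 4) := by
  obtain ⟨hε0, hε1⟩ := hε
  have hc : 0 < Real.log (1/(1-ε)) :=
    Real.log_pos (one_lt_one_div (by linarith) (by linarith))
  have h := main_tendsto _ hc
  rw [h.liminf_eq, h.limsup_eq]
  exact ⟨num_lower, le_refl _, num_upper⟩
end

section
/- Fix ε ∈ (0,1) and for each integer N ≥ 2 set α_N = ln(1/(1−ε))/ln N. Then limsup_{N→∞} Σ_{i=1}^{N−1} 1/((i+1)·i^{α_N+1}) ≤ ln(3 e^{2/3}/2) = 2/3 + ln(3/2). -/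
open Real Filter Finset

lemma telescope_sum (M : ℕ) :
    ∑ i ∈ Finset.Icc 1 M, 1 / (((i:ℝ) + 1) * (i:ℝ)) = 1 - 1/(M+1) := by
  induction M with
  | zero => simp
  | succ M ih =>
    rw [Finset.sum_Icc_succ_top (by norm_num), ih]
    have h1 : ((M:ℝ) + 1) > 0 := by positivity
    have h2 : ((M:ℝ) + 2) > 0 := by positivity
    push_cast
    field_simp
    ring

lemma one_le_target : (1:ℝ) ≤ Real.log (3 * Real.exp (2/3) / 2) := by
  have h1 : Real.exp (1/3 : ℝ) ≤ 3/2 := by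
    have h : (2/3 : ℝ) ≤ Real.exp (-(1/3)) := by
      have := Real.add_one_le_exp (-(1/3) : ℝ)
      linarith
    have hpos : (0:ℝ) < Real.exp (-(1/3)) := Real.exp_pos _
    rw [show (1/3 : ℝ) = -(-(1/3)) by ring, Real.exp_neg]
    rw [inv_le_comm₀ hpos (by norm_num)]
    linarith
  have h2 : Real.exp 1 ≤ 3 * Real.exp (2/3) / 2 := by
    have : Real.exp 1 = Real.exp (2/3) * Real.exp (1/3) := by
      rw [← Real.exp_add]; norm_num
    rw [this]
    have := mul_le_mul_of_nonneg_left h1 (Real.exp_pos (2/3 : ℝ)).le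
    linarith
  calc (1:ℝ) = Real.log (Real.exp 1) := by rw [Real.log_exp]
    _ ≤ Real.log (3 * Real.exp (2/3) / 2) :=
        Real.log_le_log (Real.exp_pos 1) h2

/-- with `α_N = ln(1/(1-ε))/ln N`,
`limsup_{N→∞} ∑_{i=1}^{N-1} 1/((i+1)·i^{α_N+1}) ≤ ln(3 e^{2/3}/2)`. -/
theorem rightRegular_hatS_limsup (ε : ℝ) (hε : ε ∈ Set.Ioo (0:ℝ) 1) :
    Filter.limsup
      (fun N : ℕ => ∑ i ∈ Finset.Icc 1 (N-1),
        1 / (((i:ℝ) + 1) * (i:ℝ) ^ ((Real.log (1/(1-ε)) / Real.log N) + 1)))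
      Filter.atTop ≤ Real.log (3 * Real.exp (2/3) / 2) := by
  obtain ⟨hε0, hε1⟩ := hε
  set f : ℕ → ℝ := fun N => ∑ i ∈ Finset.Icc 1 (N-1),
        1 / (((i:ℝ) + 1) * (i:ℝ) ^ ((Real.log (1/(1-ε)) / Real.log N) + 1)) with hf
  have key : ∀ N : ℕ, 2 ≤ N → f N ≤ 1 := by
    intro N hN
    have hlogN : 0 < Real.log N := by
      apply Real.log_pos
      exact_mod_cast (by omega : 2 ≤ N).trans_lt' (by norm_num)
    have hα : 0 ≤ Real.log (1/(1-ε)) / Real.log N := by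
      apply div_nonneg _ hlogN.le
      apply Real.log_nonneg
      rw [le_div_iff₀ (by linarith)]
      linarith
    have hterm : ∀ i ∈ Finset.Icc 1 (N-1),
        1 / (((i:ℝ) + 1) * (i:ℝ) ^ ((Real.log (1/(1-ε)) / Real.log N) + 1))
          ≤ 1 / (((i:ℝ) + 1) * (i:ℝ)) := by
      intro i hi
      have hi1 : 1 ≤ i := (Finset.mem_Icc.mp hi).1
      have hi1' : (1:ℝ) ≤ (i:ℝ) := by exact_mod_cast hi1
      have hpow : (i:ℝ) ≤ (i:ℝ) ^ ((Real.log (1/(1-ε)) / Real.log N) + 1) := by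
        calc (i:ℝ) = (i:ℝ) ^ (1:ℝ) := (Real.rpow_one _).symm
          _ ≤ _ := Real.rpow_le_rpow_of_exponent_le hi1' (by linarith)
      apply one_div_le_one_div_of_le
      · positivity
      · apply mul_le_mul_of_nonneg_left hpow (by positivity)
    calc f N ≤ ∑ i ∈ Finset.Icc 1 (N-1), 1 / (((i:ℝ) + 1) * (i:ℝ)) :=
          Finset.sum_le_sum hterm
      _ = 1 - 1/(((N-1:ℕ):ℝ)+1) := telescope_sum _
      _ ≤ 1 := by
          have : (0:ℝ) < ((N-1:ℕ):ℝ)+1 := by positivity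
          have := one_div_pos.mpr this
          linarith
  have hev : ∀ᶠ N in atTop, f N ≤ Real.log (3 * Real.exp (2/3) / 2) := by
    filter_upwards [eventually_ge_atTop 2] with N hN
    exact (key N hN).trans one_le_target
  have hcobdd : IsCoboundedUnder (· ≤ ·) atTop f := by
    apply Filter.isCoboundedUnder_le_of_eventually_le atTop (x := 0)
    filter_upwards with N
    apply Finset.sum_nonneg
    intro i hi
    positivity
  exact Filter.limsup_le_of_le hcobdd hev
end

section
/- Fix ε ∈ (0,1) and for each integer N ≥ 2 set α_N = ln(1/(1−ε))/ln N. Then liminf_{N→∞} Σ_{i=1}^{N−1} 1/((i+1)·i^{α_N+1}) ≥ ln(3√e/2) = 1/2 + ln(3/2). -/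
open Real Filter Finset Topology

lemma rightRegular_num_bound :
    Real.log (3 * Real.sqrt (Real.exp 1) / 2) ≤ 30 / 31 := by
  have h1 : Real.log (3 * Real.sqrt (Real.exp 1) / 2)
      = Real.log 3 + Real.log (Real.exp 1) / 2 - Real.log 2 := by
    rw [Real.log_div (by positivity) two_ne_zero,
      Real.log_mul (by norm_num) (by positivity),
      Real.log_sqrt (Real.exp_pos 1).le]
  have h32 : Real.log 3 - Real.log 2 = Real.log (3 / 2) :=
    (Real.log_div (by norm_num) (by norm_num)).symm
  have hs : Real.log (Real.sqrt (3 / 2)) = Real.log (3 / 2) / 2 :=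
    Real.log_sqrt (by norm_num)
  have h2 : Real.log (Real.sqrt (3 / 2)) ≤ Real.sqrt (3 / 2) - 1 :=
    Real.log_le_sub_one_of_pos (by positivity)
  have hsb : Real.sqrt (3 / 2) ≤ 1.233 := by
    rw [show (1.233 : ℝ) = Real.sqrt (1.233 ^ 2) from (Real.sqrt_sq (by norm_num)).symm]
    exact Real.sqrt_le_sqrt (by norm_num)
  rw [h1, Real.log_exp]
  nlinarith [h32, hs, h2, hsb]

/-- with `α_N = ln(1/(1-ε))/ln N`,
`liminf_{N→∞} ∑_{i=1}^{N-1} 1/((i+1)·i^{α_N+1}) ≥ ln(3√e/2)`. -/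
theorem rightRegular_hatS_liminf (ε : ℝ) (hε : ε ∈ Set.Ioo (0:ℝ) 1) :
    Real.log (3 * Real.sqrt (Real.exp 1) / 2) ≤
      Filter.liminf
        (fun N : ℕ => ∑ i ∈ Finset.Icc 1 (N-1),
          1 / (((i:ℝ) + 1) * (i:ℝ) ^ ((Real.log (1/(1-ε)) / Real.log N) + 1)))
        Filter.atTop := by
  set c : ℝ := Real.log (1/(1-ε)) with hc
  set f : ℕ → ℝ := fun N : ℕ => ∑ i ∈ Finset.Icc 1 (N-1),
      1 / (((i:ℝ) + 1) * (i:ℝ) ^ ((c / Real.log N) + 1)) with hf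
  set g : ℕ → ℝ := fun N : ℕ => ∑ i ∈ Finset.Icc (1:ℕ) 30,
      1 / (((i:ℝ) + 1) * (i:ℝ) ^ ((c / Real.log N) + 1)) with hg
  -- the exponent tends to 1
  have hα : Tendsto (fun N : ℕ => c / Real.log N + 1) atTop (𝓝 1) := by
    have hlog : Tendsto (fun N : ℕ => Real.log N) atTop atTop :=
      Real.tendsto_log_atTop.comp tendsto_natCast_atTop_atTop
    have h0 : Tendsto (fun N : ℕ => c / Real.log N) atTop (𝓝 0) :=
      Tendsto.div_atTop tendsto_const_nhds hlog
    simpa using h0.add (tendsto_const_nhds (x := (1:ℝ)))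
  -- g tends to ∑_{i=1}^{30} 1/((i+1) i)
  have hgsum : Tendsto g atTop
      (𝓝 (∑ i ∈ Finset.Icc (1:ℕ) 30, 1 / (((i:ℝ) + 1) * (i:ℝ) ^ (1:ℝ)))) := by
    apply tendsto_finset_sum
    intro i hi
    have hi1 : 1 ≤ i := (Finset.mem_Icc.mp hi).1
    have hipos : (0:ℝ) < (i:ℝ) := by exact_mod_cast hi1
    have hrpow : Tendsto (fun N : ℕ => (i:ℝ) ^ (c / Real.log N + 1)) atTop
        (𝓝 ((i:ℝ) ^ (1:ℝ))) :=
      ((Real.continuousAt_const_rpow hipos.ne').tendsto).comp hα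
    have hne : (((i:ℝ) + 1) * (i:ℝ) ^ (1:ℝ)) ≠ 0 := by positivity
    exact Tendsto.div tendsto_const_nhds (tendsto_const_nhds.mul hrpow) hne
  have hval : (∑ i ∈ Finset.Icc (1:ℕ) 30, 1 / (((i:ℝ) + 1) * (i:ℝ) ^ (1:ℝ))) = 30 / 31 := by
    simp only [Real.rpow_one]
    have h30 : Finset.Icc (1:ℕ) 30 = Finset.range 31 \ {0} := by decide
    rw [h30]
    norm_num [Finset.sum_range_succ]
  rw [hval] at hgsum
  -- eventually g ≤ f
  have hmono : ∀ᶠ N in atTop, g N ≤ f N := by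
    filter_upwards [eventually_ge_atTop 31] with N hN
    apply Finset.sum_le_sum_of_subset_of_nonneg
    · exact Finset.Icc_subset_Icc_right (by omega)
    · intro i _ _
      positivity
  have tel : ∀ m : ℕ, ∑ i ∈ Finset.Icc 1 m, 1 / (((i:ℝ) + 1) * (i:ℝ)) = 1 - 1 / (m + 1) := by
    intro m
    induction m with
    | zero => simp
    | succ n ih =>
      rw [Finset.sum_Icc_succ_top (by omega), ih]
      push_cast
      have h1 : ((n:ℝ) + 1) ≠ 0 := by positivity
      have h2 : ((n:ℝ) + 1 + 1) ≠ 0 := by positivity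
      field_simp
      ring
  have hcnn : 0 ≤ c := by
    apply Real.log_nonneg
    rw [le_div_iff₀ (by linarith [hε.2])]
    linarith [hε.1]
  have hub : ∀ᶠ N in atTop, f N ≤ 1 := by
    filter_upwards [eventually_ge_atTop 2] with N hN
    have hlogN : 0 < Real.log N := Real.log_pos (by exact_mod_cast hN)
    have step : f N ≤ ∑ i ∈ Finset.Icc 1 (N - 1), 1 / (((i:ℝ) + 1) * (i:ℝ)) := by
      apply Finset.sum_le_sum
      intro i hi
      have hi1 : (1:ℝ) ≤ (i:ℝ) := by exact_mod_cast (Finset.mem_Icc.mp hi).1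
      have hexp : (i:ℝ) ^ (1:ℝ) ≤ (i:ℝ) ^ (c / Real.log N + 1) :=
        Real.rpow_le_rpow_of_exponent_le hi1 (by
          have : 0 ≤ c / Real.log N := div_nonneg hcnn hlogN.le
          linarith)
      rw [Real.rpow_one] at hexp
      apply one_div_le_one_div_of_le (by positivity)
      nlinarith
    refine step.trans ?_
    rw [tel]
    have : (0:ℝ) ≤ 1 / ((N - 1 : ℕ) + 1) := by positivity
    linarith
  have hfcb : Filter.IsCoboundedUnder (· ≥ ·) atTop f :=
    isCoboundedUnder_ge_of_eventually_le atTop hub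
  have hgbdd : Filter.IsBoundedUnder (· ≥ ·) atTop g := hgsum.isBoundedUnder_ge
  calc Real.log (3 * Real.sqrt (Real.exp 1) / 2) ≤ 30 / 31 := rightRegular_num_bound
    _ = Filter.liminf g atTop := (hgsum.liminf_eq).symm
    _ ≤ Filter.liminf f atTop := liminf_le_liminf hmono hgbdd hfcb
end

section
/- For every p ∈ (0,1/2), h₂(p) < 2√(p(1−p)), where h₂(p) = −p·log₂(p) − (1−p)·log₂(1−p) is the binary entropy function. (Equivalently: if ε ∈ (0,1) and p ∈ (0,1/2) satisfy H(c_ε) = H(c_p), i.e. ε = h₂(p), then the Bhattacharyya parameters satisfy 𝔅(c_ε) = ε < 2√(p(1−p)) = 𝔅(c_p).) -/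
open Real

/-- The auxiliary function `h x = x * log(1 + 1/x²)` (written without division). -/
noncomputable def auxH (x : ℝ) : ℝ := x * (Real.log (1 + x ^ 2) - 2 * Real.log x)

/-- The main auxiliary function: `Φ(r) = 2 log 2 · r + 2 r² log r − (1+r²) log(1+r²)`. -/
noncomputable def auxPhi (x : ℝ) : ℝ :=
  2 * Real.log 2 * x + 2 * x ^ 2 * Real.log x - (1 + x ^ 2) * Real.log (1 + x ^ 2)

lemma hasDerivAt_auxH (r : ℝ) (hr : 0 < r) :
    HasDerivAt auxH ((Real.log (1 + r ^ 2) - 2 * Real.log r) - 2 / (1 + r ^ 2)) r := by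
  have h1 : (0 : ℝ) < 1 + r ^ 2 := by positivity
  have d0 : HasDerivAt (fun x : ℝ => 1 + x ^ 2) (2 * r) r := by
    simpa using (hasDerivAt_pow 2 r).const_add 1
  have d1 : HasDerivAt (fun x : ℝ => Real.log (1 + x ^ 2)) (2 * r / (1 + r ^ 2)) r := by
    simpa using d0.log h1.ne'
  have d2 : HasDerivAt (fun x : ℝ => Real.log (1 + x ^ 2) - 2 * Real.log x)
      (2 * r / (1 + r ^ 2) - 2 * r⁻¹) r := by
    exact d1.sub ((Real.hasDerivAt_log hr.ne').const_mul 2)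
  have d3 := (hasDerivAt_id r).mul d2
  have heq : 1 * (Real.log (1 + r ^ 2) - 2 * Real.log r) +
      r * (2 * r / (1 + r ^ 2) - 2 * r⁻¹)
      = (Real.log (1 + r ^ 2) - 2 * Real.log r) - 2 / (1 + r ^ 2) := by
    field_simp
    ring
  simp only [id_eq] at d3
  rw [heq] at d3
  exact d3

lemma auxH_strictAntiOn : StrictAntiOn auxH (Set.Ici (1 : ℝ)) := by
  apply strictAntiOn_of_deriv_neg (convex_Ici 1)
  · intro x hx
    have hx1 : (0 : ℝ) < x := lt_of_lt_of_le one_pos hx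
    exact (hasDerivAt_auxH x hx1).continuousAt.continuousWithinAt
  · intro x hx
    rw [interior_Ici] at hx
    have hx1 : (1 : ℝ) < x := hx
    have hx0 : (0 : ℝ) < x := lt_trans one_pos hx1
    rw [(hasDerivAt_auxH x hx0).deriv]
    -- need : log(1+x²) − 2 log x < 2/(1+x²)
    have h1 : (0 : ℝ) < 1 + x ^ 2 := by positivity
    have hu0 : (0 : ℝ) < (x ^ 2)⁻¹ := by positivity
    have hu1 : (x ^ 2)⁻¹ < 1 := by
      rw [inv_lt_one_iff₀]
      right
      nlinarith
    have hlogid : Real.log (1 + x ^ 2) - 2 * Real.log x = Real.log (1 + (x ^ 2)⁻¹) := by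
      have : 1 + (x ^ 2)⁻¹ = (1 + x ^ 2) / x ^ 2 := by
        field_simp
        ring
      rw [this, Real.log_div h1.ne' (by positivity), Real.log_pow]
      push_cast
      ring
    rw [hlogid]
    have hlt : Real.log (1 + (x ^ 2)⁻¹) < (x ^ 2)⁻¹ := by
      have := Real.log_lt_sub_one_of_pos (x := 1 + (x ^ 2)⁻¹) (by positivity) (by nlinarith)
      linarith
    have : (x ^ 2)⁻¹ < 2 / (1 + x ^ 2) := by
      rw [lt_div_iff₀ h1]
      have hinv : (x ^ 2)⁻¹ * (1 + x ^ 2) = (x ^ 2)⁻¹ + 1 := by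
        field_simp
      rw [hinv]
      linarith
    linarith

lemma hasDerivAt_auxPhi (r : ℝ) (hr : 0 < r) :
    HasDerivAt auxPhi (2 * (Real.log 2 - auxH r)) r := by
  have h1 : (0 : ℝ) < 1 + r ^ 2 := by positivity
  have d0 : HasDerivAt (fun x : ℝ => 1 + x ^ 2) (2 * r) r := by
    simpa using (hasDerivAt_pow 2 r).const_add 1
  have dA : HasDerivAt (fun x : ℝ => 2 * Real.log 2 * x) (2 * Real.log 2) r := by
    simpa using (hasDerivAt_id r).const_mul (2 * Real.log 2)
  have dB : HasDerivAt (fun x : ℝ => 2 * x ^ 2 * Real.log x)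
      (2 * (2 * r) * Real.log r + 2 * r ^ 2 * r⁻¹) r := by
    have h2 : HasDerivAt (fun x : ℝ => 2 * x ^ 2) (2 * (2 * r)) r := by
      simpa [mul_comm] using (hasDerivAt_pow 2 r).const_mul 2
    exact h2.mul (Real.hasDerivAt_log hr.ne')
  have dC : HasDerivAt (fun x : ℝ => (1 + x ^ 2) * Real.log (1 + x ^ 2))
      (2 * r * Real.log (1 + r ^ 2) + (1 + r ^ 2) * (2 * r / (1 + r ^ 2))) r := by
    have dlog : HasDerivAt (fun x : ℝ => Real.log (1 + x ^ 2)) (2 * r / (1 + r ^ 2)) r := by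
      simpa using d0.log h1.ne'
    exact d0.mul dlog
  have d := (dA.add dB).sub dC
  have heq : 2 * Real.log 2 + (2 * (2 * r) * Real.log r + 2 * r ^ 2 * r⁻¹) -
      (2 * r * Real.log (1 + r ^ 2) + (1 + r ^ 2) * (2 * r / (1 + r ^ 2)))
      = 2 * (Real.log 2 - auxH r) := by
    unfold auxH
    field_simp
    ring
  rw [heq] at d
  exact d.congr_deriv rfl

lemma auxPhi_pos (r : ℝ) (hr : 1 < r) : 0 < auxPhi r := by
  have h0 : (0 : ℝ) < r := lt_trans one_pos hr
  have hmono : StrictMonoOn auxPhi (Set.Ici (1 : ℝ)) := by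
    apply strictMonoOn_of_deriv_pos (convex_Ici 1)
    · intro x hx
      have hx0 : (0 : ℝ) < x := lt_of_lt_of_le one_pos hx
      exact (hasDerivAt_auxPhi x hx0).continuousAt.continuousWithinAt
    · intro x hx
      rw [interior_Ici] at hx
      have hx1 : (1 : ℝ) < x := hx
      have hx0 : (0 : ℝ) < x := lt_trans one_pos hx1
      rw [(hasDerivAt_auxPhi x hx0).deriv]
      have hH : auxH x < auxH 1 := auxH_strictAntiOn (Set.self_mem_Ici) (le_of_lt hx1) hx1
      have hH1 : auxH 1 = Real.log 2 := by
        unfold auxH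
        norm_num
      rw [hH1] at hH
      linarith
  have hPhi1 : auxPhi 1 = 0 := by
    unfold auxPhi
    norm_num
  have := hmono (Set.self_mem_Ici) (le_of_lt hr) hr
  rw [hPhi1] at this
  exact this

lemma main_ineq (r : ℝ) (hr : 1 < r) :
    (1 + r ^ 2) * Real.log (1 + r ^ 2) < 2 * Real.log 2 * r + 2 * r ^ 2 * Real.log r := by
  have := auxPhi_pos r hr
  unfold auxPhi at this
  linarith

/-- for every `p ∈ (0,1/2)`, the binary entropy satisfies
`h₂(p) < 2√(p(1-p))`; i.e. for a BEC and a BSC of equal entropy, the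
Bhattacharyya parameter of the BSC is strictly larger. -/
theorem binEntropy_lt_two_sqrt (p : ℝ) (hp : p ∈ Set.Ioo (0:ℝ) (1/2)) :
    -p * Real.logb 2 p - (1 - p) * Real.logb 2 (1 - p)
      < 2 * Real.sqrt (p * (1 - p)) := by
  obtain ⟨hp0, hp2⟩ := hp
  have hq0 : 0 < 1 - p := by linarith
  have hpq : p < 1 - p := by linarith
  set r : ℝ := Real.sqrt ((1 - p) / p) with hrdef
  have hr2 : r ^ 2 = (1 - p) / p := Real.sq_sqrt (by positivity)
  have hr1 : 1 < r := by
    have : (1 : ℝ) < (1 - p) / p := (one_lt_div hp0).mpr hpq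
    nlinarith [Real.sqrt_nonneg ((1 - p) / p), hr2]
  have hr0 : 0 < r := lt_trans one_pos hr1
  have hsum : 1 + r ^ 2 = 1 / p := by
    rw [hr2]; field_simp; ring
  have hq_eq : 1 - p = p * r ^ 2 := by
    rw [hr2]; field_simp
  have hlogp : Real.log p = -Real.log (1 + r ^ 2) := by
    rw [hsum, Real.log_div one_ne_zero hp0.ne', Real.log_one]
    ring
  have hlogq : Real.log (1 - p) = 2 * Real.log r - Real.log (1 + r ^ 2) := by
    rw [hq_eq, Real.log_mul hp0.ne' (by positivity), hlogp]
    rw [show r ^ 2 = r * r by ring, Real.log_mul hr0.ne' hr0.ne']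
    ring
  have hsqrt : Real.sqrt (p * (1 - p)) = p * r := by
    rw [hq_eq, show p * (p * r ^ 2) = (p * r) ^ 2 by ring]
    exact Real.sqrt_sq (by positivity)
  have hlog2 : (0 : ℝ) < Real.log 2 := Real.log_pos one_lt_two
  -- the key inequality, multiplied through by `p`
  have hmain := main_ineq r hr1
  have hp1 : p * (1 + r ^ 2) = 1 := by
    rw [hsum]; field_simp
  have hkey : Real.log (1 + r ^ 2) - 2 * (p * r ^ 2) * Real.log r
      < 2 * (p * r) * Real.log 2 := by
    have h1 : p * ((1 + r ^ 2) * Real.log (1 + r ^ 2))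
        < p * (2 * Real.log 2 * r + 2 * r ^ 2 * Real.log r) :=
      mul_lt_mul_of_pos_left hmain hp0
    have h2 : p * ((1 + r ^ 2) * Real.log (1 + r ^ 2)) = Real.log (1 + r ^ 2) := by
      rw [← mul_assoc, hp1, one_mul]
    rw [h2] at h1
    nlinarith [h1]
  -- now rewrite the goal
  rw [hsqrt]
  simp only [Real.logb, hlogp, hlogq]
  have hgoal : -p * (-Real.log (1 + r ^ 2) / Real.log 2)
      - (1 - p) * ((2 * Real.log r - Real.log (1 + r ^ 2)) / Real.log 2)
      = (Real.log (1 + r ^ 2) - 2 * (p * r ^ 2) * Real.log r) / Real.log 2 := by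
    rw [hq_eq]
    field_simp
    linear_combination Real.log (1 + r ^ 2) * hp1
  rw [hgoal, div_lt_iff₀ hlog2]
  nlinarith [hkey]
end

section
/- Fix ε ∈ (0,1) and κ ∈ [0,ε). For every integer N ≥ 3 and every x ∈ [0,κ], with α = H_{N−1}/ε one has α·e^{−αx}·(N−1)·(1 − e^{−αx})^{N−2} ≤ (2e²/ε)·N·ln(N)·exp(−e^{−(γ+1/2)κ/ε}·N^{1−κ/ε}). (The left-hand side equals |f''_{(N)}(x)| for the heavy-tail Poisson density-evolution function f_{(N)}; consequently the second derivatives of the f_{(N)} converge uniformly to 0 on every closed subinterval of [0,ε).) -/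
open Real Filter Finset

set_option maxHeartbeats 1000000 in
/-- for `ε ∈ (0,1)`, `κ ∈ [0,ε)`, `N ≥ 3` and `x ∈ [0,κ]`, with
`α = H_{N-1}/ε`,
`α·e^{-αx}·(N-1)·(1-e^{-αx})^{N-2} ≤ (2e²/ε)·N·ln N·exp(-e^{-(γ+1/2)κ/ε}·N^{1-κ/ε})`. -/
theorem heavyTailPoisson_second_deriv_bound (ε κ : ℝ) (hε : ε ∈ Set.Ioo (0:ℝ) 1)
    (hκ : κ ∈ Set.Ico (0:ℝ) ε) (N : ℕ) (hN : 3 ≤ N) (x : ℝ) (hx : x ∈ Set.Icc 0 κ) :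
    ((∑ k ∈ Finset.Icc 1 (N-1), (1:ℝ)/k) / ε)
        * Real.exp (-((∑ k ∈ Finset.Icc 1 (N-1), (1:ℝ)/k) / ε) * x)
        * ((N:ℝ) - 1)
        * (1 - Real.exp (-((∑ k ∈ Finset.Icc 1 (N-1), (1:ℝ)/k) / ε) * x)) ^ (N-2)
      ≤ (2 * Real.exp 2 / ε) * N * Real.log N
        * Real.exp (-Real.exp (-(Real.eulerMascheroniConstant + 1/2) * κ / ε)
            * (N:ℝ) ^ (1 - κ/ε)) := by
  obtain ⟨hε0, hε1⟩ := hε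
  obtain ⟨hκ0, hκε⟩ := hκ
  obtain ⟨hx0, hxκ⟩ := hx
  set γ := Real.eulerMascheroniConstant with hγdef
  have hγ : 1/2 < γ := Real.one_half_lt_eulerMascheroniConstant
  set H : ℝ := ∑ k ∈ Finset.Icc 1 (N-1), (1:ℝ)/k with hHdef
  have hNR : (3:ℝ) ≤ (N:ℝ) := by exact_mod_cast hN
  have hN0 : (0:ℝ) < N := by linarith
  have hN1cast : ((N-1 : ℕ):ℝ) = (N:ℝ) - 1 := by
    have h1 : 1 ≤ N := by omega
    push_cast [h1]; ring
  have hHharm : ((harmonic (N-1) : ℚ) : ℝ) = H := by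
    rw [harmonic_eq_sum_Icc]; push_cast; simp [hHdef, one_div]
  have hlog1 : 1 < Real.log N := by
    have he : Real.exp 1 < (N:ℝ) := by
      have := Real.exp_one_lt_d9; linarith
    have := Real.log_lt_log (Real.exp_pos 1) he
    rwa [Real.log_exp] at this
  have hHlb : Real.log N ≤ H := by
    have h := log_add_one_le_harmonic (N-1)
    rw [Nat.sub_add_cancel (by omega : 1 ≤ N), hHharm] at h
    exact h
  have hHub : H ≤ 1 + Real.log N := by
    have h := harmonic_le_one_add_log (N-1)
    rw [hHharm] at h
    refine h.trans ?_
    have hle : ((N-1:ℕ):ℝ) ≤ (N:ℝ) := by rw [hN1cast]; linarith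
    have hpos : (0:ℝ) < ((N-1:ℕ):ℝ) := by rw [hN1cast]; linarith
    have := Real.log_le_log hpos hle
    linarith
  have hHpos : 0 < H := by linarith
  have ha : 0 < H / ε := div_pos hHpos hε0
  set t := Real.exp (-(H / ε) * x) with htdef
  set s := Real.exp (-(H / ε) * κ) with hsdef
  have ht0 : 0 < t := Real.exp_pos _
  have ht1 : t ≤ 1 := Real.exp_le_one_iff.mpr (by nlinarith)
  have hst : s ≤ t := Real.exp_le_exp.mpr (by nlinarith)
  have hs0 : 0 < s := Real.exp_pos _
  have hs1 : s ≤ 1 := Real.exp_le_one_iff.mpr (by nlinarith)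
  set E := Real.exp (-Real.exp (-(γ + 1/2) * κ / ε) * (N:ℝ) ^ (1 - κ/ε)) with hEdef
  have hE0 : (0:ℝ) ≤ E := (Real.exp_pos _).le
  -- power bound: (1-t)^(N-2) ≤ exp(2 - N·s)
  have hNm2 : ((N-2:ℕ):ℝ) = (N:ℝ) - 2 := by
    have h2 : 2 ≤ N := by omega
    push_cast [h2]; ring
  have hpow : (1 - t)^(N-2) ≤ Real.exp (2 - (N:ℝ) * s) := by
    have h1 : (1 - t)^(N-2) ≤ (Real.exp (-t))^(N-2) :=
      pow_le_pow_left₀ (by linarith) (by nlinarith [Real.add_one_le_exp (-t)]) _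
    have h2 : (Real.exp (-t))^(N-2) = Real.exp (((N-2:ℕ):ℝ) * (-t)) := by
      rw [← Real.exp_nat_mul]
    have h3 : ((N-2:ℕ):ℝ) * (-t) ≤ 2 - (N:ℝ) * s := by
      rw [hNm2]
      nlinarith [mul_le_mul_of_nonneg_left hst (show (0:ℝ) ≤ (N:ℝ) - 2 by linarith)]
    calc (1 - t)^(N-2) ≤ (Real.exp (-t))^(N-2) := h1
      _ = Real.exp (((N-2:ℕ):ℝ) * (-t)) := h2
      _ ≤ Real.exp (2 - (N:ℝ) * s) := Real.exp_le_exp.mpr h3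
  -- exponential comparison
  have hcmp : Real.exp (2 - (N:ℝ) * s) ≤ Real.exp 2 * E := by
    rw [hEdef, ← Real.exp_add]
    apply Real.exp_le_exp.mpr
    have key : Real.exp (-(γ + 1/2) * κ / ε) * (N:ℝ) ^ (1 - κ/ε) ≤ (N:ℝ) * s := by
      rw [Real.rpow_def_of_pos hN0, ← Real.exp_add]
      have hNs : (N:ℝ) * s = Real.exp (Real.log N + (-(H / ε) * κ)) := by
        rw [Real.exp_add, Real.exp_log hN0, hsdef]
      rw [hNs]
      apply Real.exp_le_exp.mpr
      have hr : 0 ≤ κ / ε := div_nonneg hκ0 hε0.le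
      have hsum : H ≤ γ + 1/2 + Real.log N := by linarith
      have key2 : (κ/ε) * H ≤ (κ/ε) * (γ + 1/2 + Real.log N) :=
        mul_le_mul_of_nonneg_left hsum hr
      have eq1 : -(γ + 1/2) * κ / ε + Real.log N * (1 - κ/ε)
          - (Real.log N + -(H / ε) * κ)
          = (κ/ε) * H - (κ/ε) * (γ + 1/2 + Real.log N) := by ring
      linarith [key2, eq1]
    linarith
  have hH2 : H ≤ 2 * Real.log N := by linarith
  -- assemble
  calc H / ε * t * ((N:ℝ) - 1) * (1 - t)^(N-2)
      ≤ H / ε * (N:ℝ) * (1 - t)^(N-2) := by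
        have e1 : H / ε * t * ((N:ℝ) - 1) ≤ H / ε * (N:ℝ) := by
          nlinarith [mul_le_mul_of_nonneg_right (mul_le_of_le_one_right ha.le ht1)
            (show (0:ℝ) ≤ (N:ℝ) - 1 by linarith),
            mul_le_mul_of_nonneg_left (show (N:ℝ) - 1 ≤ (N:ℝ) by linarith) ha.le]
        exact mul_le_mul_of_nonneg_right e1 (pow_nonneg (by linarith) _)
    _ ≤ H / ε * (N:ℝ) * Real.exp (2 - (N:ℝ) * s) :=
        mul_le_mul_of_nonneg_left hpow (by positivity)
    _ ≤ H / ε * (N:ℝ) * (Real.exp 2 * E) :=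
        mul_le_mul_of_nonneg_left hcmp (by positivity)
    _ ≤ (2 * Real.log N) / ε * (N:ℝ) * (Real.exp 2 * E) := by
        have h1 : H / ε ≤ (2 * Real.log N) / ε := by gcongr
        have h2 : (0:ℝ) ≤ Real.exp 2 * E := by positivity
        nlinarith [mul_le_mul_of_nonneg_right (mul_le_mul_of_nonneg_right h1 hN0.le) h2]
    _ = (2 * Real.exp 2 / ε) * N * Real.log N * E := by ring
end

section
/- Fix ε ∈ (0,1). For every integer N ≥ 2, H_{N−1}·e^{−H_{N−1}}·(N−1)·(1 − e^{−H_{N−1}})^{N−2} ≥ e^{−2}·(1 − e^{−1})·(ln(N−1) + 1). Consequently, the second derivative at x = ε of the heavy-tail Poisson density-evolution function, f''_{(N)}(ε) = −(H_{N−1}/ε)·e^{−H_{N−1}}·(N−1)·(1 − e^{−H_{N−1}})^{N−2}, tends to −∞ as N → ∞. -/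
open Real Filter Finset

private lemma sum_eq_harmonic (n : ℕ) :
    (∑ k ∈ Finset.Icc 1 n, (1:ℝ)/k) = ((harmonic n : ℚ) : ℝ) := by
  rw [harmonic_eq_sum_Icc]
  push_cast
  simp [one_div]

private lemma one_le_S {n : ℕ} (hn : 1 ≤ n) :
    (1:ℝ) ≤ ∑ k ∈ Finset.Icc 1 n, (1:ℝ)/k := by
  have h1 : (1:ℕ) ∈ Finset.Icc 1 n := by simp [hn]
  have := Finset.single_le_sum (f := fun k : ℕ => (1:ℝ)/k)
    (fun i _ => by positivity) h1
  simpa using this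

private lemma log_le_S {n : ℕ} (hn : 1 ≤ n) :
    Real.log n ≤ ∑ k ∈ Finset.Icc 1 n, (1:ℝ)/k := by
  rw [sum_eq_harmonic]
  calc Real.log n ≤ Real.log (n + 1) := by
        apply Real.log_le_log (by exact_mod_cast hn)
        linarith
    _ ≤ _ := by exact_mod_cast log_add_one_le_harmonic n

private lemma S_le_log {n : ℕ} (hn : 1 ≤ n) :
    (∑ k ∈ Finset.Icc 1 n, (1:ℝ)/k) ≤ 1 + Real.log n := by
  rw [sum_eq_harmonic]
  exact_mod_cast harmonic_le_one_add_log n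

/-- `t ↦ t e^{-t}` is antitone on `[1, ∞)`. -/
private lemma texp_antitone {a b : ℝ} (ha : 1 ≤ a) (hab : a ≤ b) :
    b * Real.exp (-b) ≤ a * Real.exp (-a) := by
  have ha0 : 0 < a := lt_of_lt_of_le one_pos ha
  have key : b ≤ a * Real.exp (b - a) := by
    nlinarith [Real.add_one_le_exp (b - a), Real.exp_pos (b - a)]
  have hE : Real.exp (-b) * Real.exp (b - a) = Real.exp (-a) := by
    rw [← Real.exp_add]; ring_nf
  calc b * Real.exp (-b) ≤ (a * Real.exp (b - a)) * Real.exp (-b) := by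
        apply mul_le_mul_of_nonneg_right key (Real.exp_pos _).le
    _ = a * Real.exp (-a) := by rw [mul_assoc, mul_comm (Real.exp (b-a)), hE]

/-- `(1 - 1/m)^(m-1) ≥ e⁻¹` for `m ≥ 1`. -/
private lemma pow_ge {m : ℕ} (hm : 1 ≤ m) :
    Real.exp (-1) ≤ (1 - 1/(m:ℝ)) ^ (m - 1) := by
  rcases Nat.eq_or_lt_of_le hm with h | h
  · simp [← h]
  · have hm2 : 2 ≤ m := h
    have hmR : (2:ℝ) ≤ (m:ℝ) := by exact_mod_cast hm2
    have hm1pos : (0:ℝ) < (m:ℝ) - 1 := by linarith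
    have step : Real.exp (-(1/((m:ℝ)-1))) ≤ 1 - 1/(m:ℝ) := by
      have h1 : (m:ℝ)/((m:ℝ)-1) ≤ Real.exp (1/((m:ℝ)-1)) := by
        have := Real.add_one_le_exp (1/((m:ℝ)-1))
        have : 1 + 1/((m:ℝ)-1) ≤ Real.exp (1/((m:ℝ)-1)) := by linarith
        calc (m:ℝ)/((m:ℝ)-1) = 1 + 1/((m:ℝ)-1) := by field_simp; ring
          _ ≤ _ := this
      have hmpos : (0:ℝ) < (m:ℝ) := by linarith
      have h2 : 1 - 1/(m:ℝ) = ((m:ℝ)-1)/(m:ℝ) := by field_simp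
      rw [h2, Real.exp_neg]
      rw [inv_le_iff_one_le_mul₀ (Real.exp_pos _)] at *
      · calc (1:ℝ) = (((m:ℝ)-1)/(m:ℝ)) * ((m:ℝ)/((m:ℝ)-1)) := by field_simp
          _ ≤ (((m:ℝ)-1)/(m:ℝ)) * Real.exp (1/((m:ℝ)-1)) := by
              apply mul_le_mul_of_nonneg_left h1 (by positivity)
    calc Real.exp (-1) = (Real.exp (-(1/((m:ℝ)-1)))) ^ (m-1) := by
          rw [← Real.exp_nat_mul]
          congr 1
          have : ((m-1 : ℕ) : ℝ) = (m:ℝ) - 1 := by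
            have : (1:ℕ) ≤ m := hm
            push_cast [this]; ring
          rw [this]; field_simp
      _ ≤ (1 - 1/(m:ℝ)) ^ (m-1) := by
          apply pow_le_pow_left₀ (Real.exp_pos _).le step

private lemma key_lemma {m : ℕ} (hm : 1 ≤ m) :
    Real.exp (-2) * (1 - Real.exp (-1)) * (Real.log m + 1) ≤
      (∑ k ∈ Finset.Icc 1 m, (1:ℝ)/k)
        * Real.exp (-(∑ k ∈ Finset.Icc 1 m, (1:ℝ)/k))
        * (m:ℝ)
        * (1 - Real.exp (-(∑ k ∈ Finset.Icc 1 m, (1:ℝ)/k))) ^ (m-1) := by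
  set H := ∑ k ∈ Finset.Icc 1 m, (1:ℝ)/k with hH
  have h1 : (1:ℝ) ≤ H := one_le_S hm
  have hlog : Real.log m ≤ H := log_le_S hm
  have hup : H ≤ 1 + Real.log m := S_le_log hm
  have hmpos : (0:ℝ) < (m:ℝ) := by exact_mod_cast hm
  -- Step 1 : H e^{-H} ≥ (log m + 1) e^{-1} / m
  have step1 : (Real.log m + 1) * Real.exp (-1) / (m:ℝ) ≤ H * Real.exp (-H) := by
    have := texp_antitone h1 hup
    have hE : Real.exp (-(1 + Real.log m)) = Real.exp (-1) / m := by
      rw [neg_add, Real.exp_add, Real.exp_neg (Real.log m), Real.exp_log hmpos]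
      ring
    calc (Real.log m + 1) * Real.exp (-1) / (m:ℝ)
        = (1 + Real.log m) * Real.exp (-(1 + Real.log m)) := by rw [hE]; ring
      _ ≤ H * Real.exp (-H) := this
  -- Step 2 : e^{-H} ≤ 1/m hence (1 - e^{-H})^(m-1) ≥ e^{-1}
  have hEH : Real.exp (-H) ≤ 1/(m:ℝ) := by
    rw [Real.exp_neg]
    rw [one_div, inv_le_inv₀ (Real.exp_pos _) hmpos]
    calc (m:ℝ) = Real.exp (Real.log m) := (Real.exp_log hmpos).symm
      _ ≤ Real.exp H := Real.exp_le_exp.mpr hlog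
  have step2 : Real.exp (-1) ≤ (1 - Real.exp (-H)) ^ (m-1) := by
    calc Real.exp (-1) ≤ (1 - 1/(m:ℝ)) ^ (m-1) := pow_ge hm
      _ ≤ (1 - Real.exp (-H)) ^ (m-1) := by
          apply pow_le_pow_left₀
          · have : (1:ℝ) ≤ (m:ℝ) := by exact_mod_cast hm
            have : 1/(m:ℝ) ≤ 1 := by
              rw [div_le_one hmpos]; exact this
            linarith
          · linarith
  have hlogpos : (0:ℝ) < Real.log m + 1 := by
    have : (0:ℝ) ≤ Real.log m := Real.log_nonneg (by exact_mod_cast hm)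
    linarith
  have hfac : (1:ℝ) - Real.exp (-1) ≤ 1 := by
    have := Real.exp_pos (-1 : ℝ); linarith
  calc Real.exp (-2) * (1 - Real.exp (-1)) * (Real.log m + 1)
      ≤ Real.exp (-2) * 1 * (Real.log m + 1) := by
        apply mul_le_mul_of_nonneg_right _ hlogpos.le
        apply mul_le_mul_of_nonneg_left hfac (Real.exp_pos _).le
    _ = ((Real.log m + 1) * Real.exp (-1) / (m:ℝ)) * (m:ℝ) * Real.exp (-1) := by
        rw [show (-2:ℝ) = -1 + -1 by norm_num, Real.exp_add]
        field_simp
    _ ≤ (H * Real.exp (-H)) * (m:ℝ) * (1 - Real.exp (-H)) ^ (m-1) := by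
        apply mul_le_mul
        · exact mul_le_mul_of_nonneg_right step1 hmpos.le
        · exact step2
        · exact (Real.exp_pos _).le
        · positivity
    _ = H * Real.exp (-H) * (m:ℝ) * (1 - Real.exp (-H)) ^ (m-1) := by ring

/-- for `ε ∈ (0,1)` and every `N ≥ 2`,
`H_{N-1}·e^{-H_{N-1}}·(N-1)·(1-e^{-H_{N-1}})^{N-2} ≥ e^{-2}(1-e^{-1})(ln(N-1)+1)`;
consequently `f''_{(N)}(ε) = -(H_{N-1}/ε)·e^{-H_{N-1}}·(N-1)·(1-e^{-H_{N-1}})^{N-2}`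
tends to `-∞` as `N → ∞`. -/
theorem heavyTailPoisson_second_deriv_at_eps (ε : ℝ) (hε : ε ∈ Set.Ioo (0:ℝ) 1) :
    (∀ N : ℕ, 2 ≤ N →
      Real.exp (-2) * (1 - Real.exp (-1)) * (Real.log ((N:ℝ) - 1) + 1) ≤
        (∑ k ∈ Finset.Icc 1 (N-1), (1:ℝ)/k)
          * Real.exp (-(∑ k ∈ Finset.Icc 1 (N-1), (1:ℝ)/k))
          * ((N:ℝ) - 1)
          * (1 - Real.exp (-(∑ k ∈ Finset.Icc 1 (N-1), (1:ℝ)/k))) ^ (N-2))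
    ∧
    Tendsto
      (fun N : ℕ =>
        -((∑ k ∈ Finset.Icc 1 (N-1), (1:ℝ)/k) / ε)
          * Real.exp (-(∑ k ∈ Finset.Icc 1 (N-1), (1:ℝ)/k))
          * ((N:ℝ) - 1)
          * (1 - Real.exp (-(∑ k ∈ Finset.Icc 1 (N-1), (1:ℝ)/k))) ^ (N-2))
      atTop atBot := by
  have hε0 : 0 < ε := hε.1
  have hpart1 : ∀ N : ℕ, 2 ≤ N →
      Real.exp (-2) * (1 - Real.exp (-1)) * (Real.log ((N:ℝ) - 1) + 1) ≤
        (∑ k ∈ Finset.Icc 1 (N-1), (1:ℝ)/k)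
          * Real.exp (-(∑ k ∈ Finset.Icc 1 (N-1), (1:ℝ)/k))
          * ((N:ℝ) - 1)
          * (1 - Real.exp (-(∑ k ∈ Finset.Icc 1 (N-1), (1:ℝ)/k))) ^ (N-2) := by
    intro N hN
    have h1N : (1:ℕ) ≤ N := by omega
    have hm : 1 ≤ N - 1 := by omega
    have hNm : ((N:ℝ) - 1) = ((N-1 : ℕ) : ℝ) := by
      rw [Nat.cast_sub h1N, Nat.cast_one]
    have hexp : N - 2 = (N-1) - 1 := by omega
    rw [hNm, hexp]
    exact key_lemma hm
  refine ⟨hpart1, ?_⟩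
  have hcpos : 0 < Real.exp (-2) * (1 - Real.exp (-1)) := by
    apply mul_pos (Real.exp_pos _)
    have : Real.exp (-1:ℝ) < 1 := Real.exp_lt_one_iff.mpr (by norm_num)
    linarith
  have hg : Tendsto (fun N : ℕ =>
      -((Real.exp (-2) * (1 - Real.exp (-1)) / ε) * (Real.log ((N:ℝ) - 1) + 1)))
      atTop atBot := by
    apply tendsto_neg_atTop_atBot.comp
    apply Tendsto.const_mul_atTop (div_pos hcpos hε0)
    apply tendsto_atTop_add_const_right
    apply Real.tendsto_log_atTop.comp
    have := tendsto_atTop_add_const_right atTop (-1 : ℝ) tendsto_natCast_atTop_atTop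
    simpa [sub_eq_add_neg] using this
  apply tendsto_atBot_mono' atTop _ hg
  filter_upwards [eventually_ge_atTop 2] with N hN
  have hkey := hpart1 N hN
  set H := ∑ k ∈ Finset.Icc 1 (N-1), (1:ℝ)/k with hH
  set A := H * Real.exp (-H) * ((N:ℝ) - 1) * (1 - Real.exp (-H)) ^ (N-2) with hA
  have heq : -(H / ε) * Real.exp (-H) * ((N:ℝ) - 1) * (1 - Real.exp (-H)) ^ (N-2)
      = -(A / ε) := by rw [hA]; ring
  rw [heq]
  have h2 : Real.exp (-2) * (1 - Real.exp (-1)) * (Real.log ((N:ℝ) - 1) + 1) / ε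
      ≤ A / ε := div_le_div_of_nonneg_right hkey hε0.le
  have := neg_le_neg h2
  calc -(A / ε) ≤ -(Real.exp (-2) * (1 - Real.exp (-1)) * (Real.log ((N:ℝ) - 1) + 1) / ε) := this
    _ = -((Real.exp (-2) * (1 - Real.exp (-1)) / ε) * (Real.log ((N:ℝ) - 1) + 1)) := by ring
end

section
/- Let p ∈ [0,1/2], let l ≥ 3 be an odd integer, and define B(k₀; k₁) = Σ_{i=k₀}^{k₁} C(l,i)·p^{l−i}·(1−p)^i, where C(l,i) is the binomial coefficient. Then for every integer k with 0 ≤ k ≤ (l+1)/2, B(0; (l−1)/2) ≤ B(k; k + (l−1)/2). -/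
open Real Finset

lemma choose_mono_left_half {n : ℕ} : ∀ a : ℕ, ∀ j : ℕ, j ≤ a → a ≤ n / 2 →
    n.choose j ≤ n.choose a := by
  intro a
  induction a with
  | zero => intro j hja _; have : j = 0 := by omega
            subst this; exact le_refl _
  | succ a ih =>
    intro j hja ha
    rcases Nat.eq_or_lt_of_le hja with h | h
    · subst h; exact le_refl _
    · exact (ih j (by omega) (by omega)).trans
        (Nat.choose_le_succ_of_lt_half_left (by omega))

/-- for `p ∈ [0,1/2]`, odd `l ≥ 3`, and every integer
`0 ≤ k ≤ (l+1)/2`, with `B(k₀;k₁) = ∑_{i=k₀}^{k₁} C(l,i)·p^{l-i}·(1-p)^i`,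
`B(0;(l-1)/2) ≤ B(k;k+(l-1)/2)`. -/
theorem bsc_window_shift (p : ℝ) (hp : p ∈ Set.Icc (0:ℝ) (1/2))
    (l : ℕ) (hl : 3 ≤ l) (hodd : Odd l) (k : ℕ) (hk : k ≤ (l+1)/2) :
    ∑ i ∈ Finset.Icc 0 ((l-1)/2), (l.choose i : ℝ) * p^(l-i) * (1-p)^i ≤
    ∑ i ∈ Finset.Icc k (k + (l-1)/2), (l.choose i : ℝ) * p^(l-i) * (1-p)^i := by
  obtain ⟨hp0, hp2⟩ := hp
  have hq0 : (0:ℝ) ≤ 1 - p := by linarith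
  have hpq : p ≤ 1 - p := by linarith
  obtain ⟨m, hm⟩ := hodd
  have hm2 : (l - 1) / 2 = m := by omega
  have hk' : k ≤ m + 1 := by omega
  set t : ℕ → ℝ := fun i => (l.choose i : ℝ) * p^(l-i) * (1-p)^i with ht
  -- key pointwise inequality
  have key : ∀ j : ℕ, j < k → t j ≤ t (m + 1 + (k - 1 - j)) := by
    intro j hj
    have hi : m + 1 + (k - 1 - j) = m + k - j := by omega
    set a : ℕ := m + 1 - k + j with hadef
    have hia : m + k - j = l - a := by omega
    have hal : a ≤ l := by omega
    have hchoose : l.choose (m + 1 + (k - 1 - j)) = l.choose a := by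
      rw [hi, hia, Nat.choose_symm hal]
    have hja : j ≤ a := by omega
    have ham : a ≤ l / 2 := by omega
    have hcle : (l.choose j : ℝ) ≤ (l.choose a : ℝ) := by
      exact_mod_cast choose_mono_left_half a j hja ham
    have hd1 : l - j = a + (m + k - 2*j) := by omega
    have hd2 : l - (m + 1 + (k - 1 - j)) = a := by omega
    have hd3 : l - a = (m + k - 2*j) + j := by omega
    have hpd : p ^ (m + k - 2*j) ≤ (1-p) ^ (m + k - 2*j) :=
      pow_le_pow_left₀ hp0 hpq _
    have hL : t j = (l.choose j : ℝ) * (p^a * p^(m+k-2*j)) * (1-p)^j := by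
      simp only [ht]; rw [hd1, pow_add]
    have hR : t (m+1+(k-1-j))
        = (l.choose a : ℝ) * p^a * ((1-p)^(m+k-2*j) * (1-p)^j) := by
      simp only [ht]; rw [hchoose, hd2, hi, hia, hd3, pow_add, pow_add]
    rw [hL, hR]
    calc (l.choose j : ℝ) * (p ^ a * p ^ (m + k - 2*j)) * (1-p) ^ j
        ≤ (l.choose a : ℝ) * (p ^ a * (1-p) ^ (m + k - 2*j)) * (1-p) ^ j := by
          gcongr
      _ = (l.choose a : ℝ) * p ^ a * ((1-p) ^ (m + k - 2*j) * (1-p) ^ j) := by ring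
  rw [hm2]
  have e1 : Finset.Icc 0 m = Finset.Ico 0 (m+1) := by
    rw [Finset.Ico_add_one_right_eq_Icc]
  have e2 : Finset.Icc k (k+m) = Finset.Ico k (m+1+k) := by
    rw [show m+1+k = (k+m)+1 by omega, Finset.Ico_add_one_right_eq_Icc]
  rw [e1, e2]
  rw [← Finset.sum_Ico_consecutive t (Nat.zero_le k) (by omega : k ≤ m+1),
      ← Finset.sum_Ico_consecutive t (by omega : k ≤ m+1) (by omega : m+1 ≤ m+1+k)]
  have hsplit : ∑ i ∈ Finset.Ico 0 k, t i ≤ ∑ i ∈ Finset.Ico (m+1) (m+1+k), t i := by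
    rw [Finset.sum_Ico_eq_sum_range, Finset.sum_Ico_eq_sum_range]
    simp only [Nat.sub_zero, Nat.add_sub_cancel_left, Nat.zero_add]
    rw [← Finset.sum_range_reflect (fun i => t (m + 1 + i)) k]
    exact Finset.sum_le_sum fun j hj => key j (Finset.mem_range.mp hj)
  linarith
end

section
/- Let γ and d be real numbers with 1 < γ < d, let l ≥ 1 be an integer, let δ ∈ (0,1), and write δ̄ = 1 − δ. Define g : (0,∞) → (0,∞) by g(s) = e^{s·δ̄·γ^l}·(1 − γ^l/d^l + (γ^l/d^l)·e^{−s·d^l}). Then for all s > 0, g(s) ≥ δ̄^{−δ̄γ^l/d^l} · ((d^l − γ^l)/(d^l − δ̄γ^l))^{1 − δ̄γ^l/d^l}. -/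
open Real

/-- for `1 < γ < d`, `l ≥ 1`, `δ ∈ (0,1)` and `δ̄ = 1-δ`, the
Chernoff-bound function `g(s) = e^{sδ̄γ^l}(1 - γ^l/d^l + (γ^l/d^l)e^{-sd^l})`
satisfies `g(s) ≥ δ̄^{-δ̄γ^l/d^l}·((d^l-γ^l)/(d^l-δ̄γ^l))^{1-δ̄γ^l/d^l}` for all `s > 0`. -/
theorem chernoff_g_lower_bound (γ d : ℝ) (h1 : 1 < γ) (h2 : γ < d)
    (l : ℕ) (hl : 1 ≤ l) (δ : ℝ) (hδ : δ ∈ Set.Ioo (0:ℝ) 1) (s : ℝ) (hs : 0 < s) :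
    (1 - δ) ^ (-(1 - δ) * γ^l / d^l)
        * ((d^l - γ^l) / (d^l - (1 - δ) * γ^l)) ^ (1 - (1 - δ) * γ^l / d^l)
      ≤ Real.exp (s * (1 - δ) * γ^l)
        * (1 - γ^l / d^l + (γ^l / d^l) * Real.exp (-s * d^l)) := by
  obtain ⟨hδ0, hδ1⟩ := hδ
  have hγ0 : (0:ℝ) < γ := by linarith
  have hd0 : (0:ℝ) < d := by linarith
  have hG : (0:ℝ) < γ^l := pow_pos hγ0 l
  have hD : (0:ℝ) < d^l := pow_pos hd0 l
  have hGD : γ^l < d^l := pow_lt_pow_left₀ h2 hγ0.le (by omega)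
  set p : ℝ := γ^l / d^l with hp
  have hp0 : 0 < p := div_pos hG hD
  have hp1 : p < 1 := (div_lt_one hD).mpr hGD
  set c : ℝ := (1 - δ) * p with hc
  have hδb : 0 < 1 - δ := by linarith
  have hc0 : 0 < c := mul_pos hδb hp0
  have hcp : c < p := by nlinarith
  have hc1 : c < 1 := hcp.trans hp1
  set t : ℝ := Real.exp (-s * d^l) with ht
  have ht0 : 0 < t := Real.exp_pos _
  -- rewrite exponents and base in terms of p, c
  have he1 : -(1 - δ) * γ^l / d^l = -c := by
    rw [hc, hp]; ring
  have he2 : 1 - (1 - δ) * γ^l / d^l = 1 - c := by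
    rw [hc, hp]; ring
  have he3 : (d^l - γ^l) / (d^l - (1 - δ) * γ^l) = (1-p)/(1-c) := by
    rw [hc, hp]
    rw [div_eq_div_iff (by nlinarith) (by
      have : (1-δ) * (γ^l/d^l) < 1 := by
        calc (1-δ) * (γ^l/d^l) ≤ 1 * (γ^l/d^l) := by
              apply mul_le_mul_of_nonneg_right (by linarith) (le_of_lt (div_pos hG hD))
          _ < 1 := by rw [one_mul]; exact (div_lt_one hD).mpr hGD
      linarith)]
    field_simp
  have he4 : Real.exp (s * (1 - δ) * γ^l) = t ^ (-c) := by
    rw [ht, ← Real.exp_mul]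
    congr 1
    rw [hc, hp]
    field_simp
  have he5 : 1 - γ^l / d^l + (γ^l / d^l) * Real.exp (-s * d^l) = 1 - p + p * t := rfl
  rw [he1, he2, he3, he4, he5]
  -- AM-GM
  have amgm := Real.geom_mean_le_arith_mean2_weighted hc0.le (by linarith : (0:ℝ) ≤ 1 - c)
    (le_of_lt (div_pos (mul_pos hp0 ht0) hc0))
    (le_of_lt (div_pos (by linarith : (0:ℝ) < 1-p) (by linarith : (0:ℝ) < 1-c))) (by ring)
  have e1 : p * t / c = t / (1-δ) := by
    rw [hc]
    field_simp
  have e2 : (t / (1-δ)) ^ c = t ^ c * (1-δ) ^ (-c) := by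
    rw [Real.div_rpow ht0.le hδb.le, Real.rpow_neg hδb.le, div_eq_mul_inv]
  have e3 : t ^ (-c) * t ^ c = 1 := by
    rw [← Real.rpow_add ht0]
    norm_num
  calc (1-δ) ^ (-c) * ((1-p)/(1-c)) ^ (1-c)
      = t ^ (-c) * ((p * t / c) ^ c * ((1-p)/(1-c)) ^ (1-c)) := by
        rw [e1, e2, ← mul_assoc, ← mul_assoc, e3, one_mul]
    _ ≤ t ^ (-c) * (c * (p * t / c) + (1-c) * ((1-p)/(1-c))) := by
        exact mul_le_mul_of_nonneg_left amgm (Real.rpow_pos_of_pos ht0 _).le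
    _ = t ^ (-c) * (1 - p + p * t) := by
        congr 1
        field_simp
        rw [mul_comm (1-c) (1-p), mul_div_assoc, div_self (show (1:ℝ)-c ≠ 0 by linarith), mul_one]
        ring
end

section
/- Let α ≥ 0 be real, let W ≥ 3 be an odd integer, and let N ≥ 4 be an integer. Then Σ_{i=3}^{N−1} 1/((i+1)·i^{α+1}) ≤ Σ_{w=1}^{W} ((−1)^{w−1}/(α+w))·(2^{−(α+w)} − (N−1)^{−(α+w)}). -/
open Real Finset


noncomputable def Fsum (α : ℝ) (W : ℕ) (x : ℝ) : ℝ :=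
  ∑ w ∈ Finset.Icc 1 W, ((-1:ℝ)^(w-1) / (α + w)) * x ^ (-(α + w))

noncomputable def gsum (α : ℝ) (W : ℕ) (x : ℝ) : ℝ :=
  ∑ w ∈ Finset.Icc 1 W, (-1:ℝ)^(w-1) * x ^ (-(α + w) - 1)

lemma alt_ge (y : ℝ) (hy : 0 < y) (W : ℕ) (hWodd : Odd W) :
    y / (1 + y) ≤ ∑ w ∈ Finset.Icc 1 W, (-1:ℝ)^(w-1) * y ^ w := by
  have h1 : ∑ w ∈ Finset.Icc 1 W, (-1:ℝ)^(w-1) * y ^ w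
      = y * ∑ k ∈ Finset.range W, (-y) ^ k := by
    rw [← Finset.Ico_add_one_right_eq_Icc, Finset.sum_Ico_eq_sum_range, Finset.mul_sum]
    apply Finset.sum_congr (by simp)
    intro k _
    have hk : 1 + k - 1 = k := by omega
    rw [hk, neg_pow, pow_add, pow_one]
    ring
  have hne : (-y) ≠ 1 := by linarith
  rw [h1, geom_sum_eq hne, hWodd.neg_pow]
  have h2 : (-(y ^ W) - 1) / (-y - 1) = (y ^ W + 1) / (y + 1) := by
    rw [div_eq_div_iff (by linarith) (by positivity)]
    ring
  rw [h2, mul_div_assoc']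
  rw [div_le_div_iff₀ (by linarith) (by linarith)]
  have h3 : 0 ≤ y * y ^ W * (1 + y) := by positivity
  nlinarith [h3]

lemma gsum_ge (α : ℝ) (hα : 0 ≤ α) (W : ℕ) (hWodd : Odd W) (x : ℝ) (hx : 0 < x) :
    1 / ((x + 1) * x ^ (α + 1)) ≤ gsum α W x := by
  have key : gsum α W x = x ^ (-(α+1)) * ∑ w ∈ Finset.Icc 1 W, (-1:ℝ)^(w-1) * x⁻¹ ^ w := by
    rw [gsum, Finset.mul_sum]
    apply Finset.sum_congr rfl
    intro w _
    have : -(α + (w:ℝ)) - 1 = (-(α+1)) + (-(w:ℝ)) := by ring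
    rw [this, Real.rpow_add hx]
    rw [Real.rpow_neg hx.le (w:ℝ), Real.rpow_natCast, ← inv_pow]
    ring
  rw [key]
  have h1 := alt_ge x⁻¹ (by positivity) W hWodd
  have h2 : x⁻¹ / (1 + x⁻¹) = 1 / (x + 1) := by
    rw [div_eq_div_iff (by positivity) (by linarith)]
    field_simp
  rw [h2] at h1
  have hxp : (0:ℝ) < x ^ (-(α+1)) := Real.rpow_pos_of_pos hx _
  calc 1 / ((x + 1) * x ^ (α + 1)) = x ^ (-(α+1)) * (1 / (x+1)) := by
        rw [Real.rpow_neg hx.le]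
        field_simp
    _ ≤ x ^ (-(α+1)) * ∑ w ∈ Finset.Icc 1 W, (-1:ℝ)^(w-1) * x⁻¹ ^ w := by
        exact mul_le_mul_of_nonneg_left h1 hxp.le

lemma Fsum_deriv (α : ℝ) (hα : 0 ≤ α) (W : ℕ) (x : ℝ) (hx : 0 < x) :
    HasDerivAt (Fsum α W) (-(gsum α W x)) x := by
  rw [gsum, ← Finset.sum_neg_distrib]
  apply HasDerivAt.fun_sum
  intro w hw
  have hw1 : 1 ≤ w := (Finset.mem_Icc.mp hw).1
  have hαw : (0:ℝ) < α + w := by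
    have : (1:ℝ) ≤ (w:ℝ) := by exact_mod_cast hw1
    linarith
  have h := (Real.hasDerivAt_rpow_const (p := -(α + w)) (Or.inl hx.ne')).const_mul
    ((-1:ℝ)^(w-1) / (α + w))
  convert h using 1
  · rfl
  field_simp

lemma Fsum_step (α : ℝ) (hα : 0 ≤ α) (W : ℕ) (hWodd : Odd W) (i : ℕ) (hi : 3 ≤ i) :
    1 / (((i:ℝ) + 1) * (i:ℝ) ^ (α + 1)) ≤ Fsum α W ((i:ℝ) - 1) - Fsum α W i := by
  have hi' : (3:ℝ) ≤ (i:ℝ) := by exact_mod_cast hi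
  have hab : (i:ℝ) - 1 < i := by linarith
  obtain ⟨c, hc, hc'⟩ := exists_hasDerivAt_eq_slope (Fsum α W) (fun x => -(gsum α W x)) hab
    (fun x hx => (Fsum_deriv α hα W x (by have := hx.1; simp at this ⊢; linarith)).continuousAt.continuousWithinAt)
    (fun x hx => Fsum_deriv α hα W x (by have := hx.1; linarith))
  have hden : (i:ℝ) - ((i:ℝ) - 1) = 1 := by ring
  rw [hden, div_one] at hc'
  have hcpos : 0 < c := by have := hc.1; linarith
  have h1 := gsum_ge α hα W hWodd c hcpos
  have hstep : Fsum α W ((i:ℝ)-1) - Fsum α W i = gsum α W c := by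
    linarith
  rw [hstep]
  refine le_trans ?_ h1
  apply one_div_le_one_div_of_le (by positivity)
  have hcle : c ≤ i := le_of_lt hc.2
  have h2 : c ^ (α+1) ≤ (i:ℝ)^(α+1) := Real.rpow_le_rpow hcpos.le hcle (by linarith)
  have h3 : (0:ℝ) < c ^ (α+1) := Real.rpow_pos_of_pos hcpos _
  exact mul_le_mul (by linarith) h2 h3.le (by linarith)

/-- for `α ≥ 0`, odd `W ≥ 3`, `N ≥ 4`,
`∑_{i=3}^{N-1} 1/((i+1)·i^{α+1})
  ≤ ∑_{w=1}^{W} ((-1)^{w-1}/(α+w))·(2^{-(α+w)} - (N-1)^{-(α+w)})`. -/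
theorem rightRegular_sum_upper_bound (α : ℝ) (hα : 0 ≤ α)
    (W : ℕ) (hW : 3 ≤ W) (hWodd : Odd W) (N : ℕ) (hN : 4 ≤ N) :
    ∑ i ∈ Finset.Icc 3 (N-1), 1 / (((i:ℝ) + 1) * (i:ℝ) ^ (α + 1))
      ≤ ∑ w ∈ Finset.Icc 1 W,
          ((-1:ℝ)^(w-1) / (α + w))
            * ((2:ℝ) ^ (-(α + w)) - ((N:ℝ) - 1) ^ (-(α + w))) := by
  set G : ℕ → ℝ := fun n => Fsum α W n with hG
  have step1 : ∑ i ∈ Finset.Icc 3 (N-1), 1 / (((i:ℝ) + 1) * (i:ℝ) ^ (α + 1))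
      ≤ ∑ i ∈ Finset.Icc 3 (N-1), (G (i-1) - G i) := by
    apply Finset.sum_le_sum
    intro i hi
    have hi3 : 3 ≤ i := (Finset.mem_Icc.mp hi).1
    have hcast : ((i-1:ℕ):ℝ) = (i:ℝ) - 1 := by
      rw [Nat.cast_sub (by omega)]; norm_num
    simpa [hG, hcast] using Fsum_step α hα W hWodd i hi3
  have step2 : ∑ i ∈ Finset.Icc 3 (N-1), (G (i-1) - G i) = G 2 - G (N-1) := by
    have hIcc : Finset.Icc 3 (N-1) = Finset.Ico 3 N := by
      rw [← Finset.Ico_add_one_right_eq_Icc]; congr 1; omega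
    rw [hIcc, Finset.sum_Ico_eq_sum_range]
    have : ∀ k ∈ Finset.range (N - 3), (G (3 + k - 1) - G (3 + k))
        = (fun k => G (k + 2)) k - (fun k => G (k + 2)) (k + 1) := by
      intro k _
      have e1 : 3 + k - 1 = k + 2 := by omega
      have e2 : 3 + k = (k + 1) + 2 := by omega
      rw [e1, e2]
    rw [Finset.sum_congr rfl this, Finset.sum_range_sub' (fun k => G (k + 2))]
    have : N - 3 + 2 = N - 1 := by omega
    rw [this]
  have step3 : G 2 - G (N-1) = ∑ w ∈ Finset.Icc 1 W,
      ((-1:ℝ)^(w-1) / (α + w)) * ((2:ℝ) ^ (-(α + w)) - ((N:ℝ) - 1) ^ (-(α + w))) := by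
    have hc2 : ((2:ℕ):ℝ) = (2:ℝ) := by norm_num
    have hcN : ((N-1:ℕ):ℝ) = (N:ℝ) - 1 := by
      rw [Nat.cast_sub (by omega)]; norm_num
    simp only [hG, Fsum, hc2, hcN, ← Finset.sum_sub_distrib]
    apply Finset.sum_congr rfl
    intro w _
    ring
  linarith [step1, step2.le, step3.le]
end

section
/- Let α ≥ 0 be real, let W ≥ 3 be an odd integer, and let N ≥ 3 be an integer. Then Σ_{i=2}^{N−1} 1/((i+1)·i^{α+1}) ≥ Σ_{w=1}^{W+1} ((−1)^{w−1}/(α+w))·(2^{−(α+w)} − N^{−(α+w)}). -/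
open Real Finset

lemma my_anti (β : ℝ) (hβ : 1 ≤ β) :
    AntitoneOn (fun t : ℝ => t ^ (-(β+1)) - t ^ (-(β+2))) (Set.Ici 2) := by
  have hderiv : ∀ t : ℝ, 2 ≤ t → HasDerivAt (fun t : ℝ => t ^ (-(β+1)) - t ^ (-(β+2)))
      ((-(β+1)) * t ^ (-(β+1)-1) - (-(β+2)) * t ^ (-(β+2)-1)) t := by
    intro t ht
    have h0 : t ≠ 0 := by positivity
    exact ((Real.hasDerivAt_rpow_const (Or.inl h0)).sub
      (Real.hasDerivAt_rpow_const (Or.inl h0)))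
  apply antitoneOn_of_deriv_nonpos (convex_Ici 2)
  · apply ContinuousOn.sub
    · exact fun t ht => (Real.continuousAt_rpow_const t _ (Or.inl (by simp at ht; positivity))).continuousWithinAt
    · exact fun t ht => (Real.continuousAt_rpow_const t _ (Or.inl (by simp at ht; positivity))).continuousWithinAt
  · intro t ht
    rw [interior_Ici] at ht
    exact (hderiv t (le_of_lt ht)).differentiableAt.differentiableWithinAt
  · intro t ht
    rw [interior_Ici] at ht
    have ht2 : (2:ℝ) < t := ht
    rw [(hderiv t ht2.le).deriv]
    have h0 : (0:ℝ) < t := by linarith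
    have e : t ^ (-(β+1)-1) = t * t ^ (-(β+2)-1) := by
      rw [show -(β+1)-1 = 1 + (-(β+2)-1) by ring, Real.rpow_one_add' h0.le (by intro h; nlinarith)]
    rw [e]
    have hs : (0:ℝ) < t ^ (-(β+2)-1) := Real.rpow_pos_of_pos h0 _
    have key : (β+2) ≤ (β+1)*t := by nlinarith
    nlinarith [mul_le_mul_of_nonneg_right key hs.le]

lemma my_pair_bound (β x : ℝ) (hβ : 1 ≤ β) (hx : 2 ≤ x) :
    (x^(-β) - (x+1)^(-β))/β - (x^(-(β+1)) - (x+1)^(-(β+1)))/(β+1)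
      ≤ x^(-(β+1)) - x^(-(β+2)) := by
  have hx0 : (0:ℝ) < x := by linarith
  have hmem : (0:ℝ) ∉ Set.uIcc x (x+1) := by
    rw [Set.uIcc_of_le (by linarith)]
    intro h
    exact absurd h.1 (by norm_num; linarith)
  have hint1 : IntervalIntegrable (fun t : ℝ => t ^ (-(β+1))) MeasureTheory.volume x (x+1) :=
    intervalIntegral.intervalIntegrable_rpow (Or.inr hmem)
  have hint2 : IntervalIntegrable (fun t : ℝ => t ^ (-(β+2))) MeasureTheory.volume x (x+1) :=
    intervalIntegral.intervalIntegrable_rpow (Or.inr hmem)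
  have I1 : ∫ t in x..(x+1), t ^ (-(β+1)) = (x^(-β) - (x+1)^(-β))/β := by
    rw [integral_rpow (Or.inr ⟨by intro h; nlinarith [hβ], hmem⟩)]
    rw [show -(β+1)+1 = -β by ring]
    rw [div_eq_div_iff (by intro h; nlinarith) (by positivity)]
    ring
  have I2 : ∫ t in x..(x+1), t ^ (-(β+2)) = (x^(-(β+1)) - (x+1)^(-(β+1)))/(β+1) := by
    rw [integral_rpow (Or.inr ⟨by intro h; nlinarith [hβ], hmem⟩)]
    rw [show -(β+2)+1 = -(β+1) by ring]
    rw [div_eq_div_iff (by intro h; nlinarith) (by positivity)]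
    ring
  have Isub : ∫ t in x..(x+1), (t ^ (-(β+1)) - t ^ (-(β+2)))
      = (x^(-β) - (x+1)^(-β))/β - (x^(-(β+1)) - (x+1)^(-(β+1)))/(β+1) := by
    rw [intervalIntegral.integral_sub hint1 hint2, I1, I2]
  rw [← Isub]
  have hconst : ∫ t in x..(x+1), (x ^ (-(β+1)) - x ^ (-(β+2)))
      = x ^ (-(β+1)) - x ^ (-(β+2)) := by
    rw [intervalIntegral.integral_const]
    simp
  rw [← hconst]
  apply intervalIntegral.integral_mono_on (by linarith) (hint1.sub hint2)
    intervalIntegrable_const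
  intro t ht
  exact my_anti β hβ (Set.mem_Ici.mpr hx) (Set.mem_Ici.mpr (by linarith [ht.1])) ht.1

lemma my_sum_pair (M : ℕ) (b : ℕ → ℝ) :
    ∑ j ∈ range (2*M), b j = ∑ k ∈ range M, (b (2*k) + b (2*k+1)) := by
  induction M with
  | zero => simp
  | succ n ih =>
      rw [show 2*(n+1) = (2*n)+1+1 by ring, Finset.sum_range_succ, Finset.sum_range_succ,
        ih, Finset.sum_range_succ]; ring

lemma my_telescope (f : ℕ → ℝ) (N : ℕ) (hN : 2 ≤ N) :
    ∑ i ∈ Icc 2 (N-1), (f i - f (i+1)) = f 2 - f N := by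
  induction N, hN using Nat.le_induction with
  | base => simp
  | succ n hn ih =>
      have h1 : n+1-1 = n := rfl
      have h2 : n = (n-1)+1 := by omega
      rw [h1, h2, Finset.sum_Icc_succ_top (by omega), ← h2, ih]
      ring

lemma my_geom (α : ℝ) (hα : 0 ≤ α) (M : ℕ) (x : ℝ) (hx : 2 ≤ x) :
    ∑ k ∈ range M, (x^(-(α+2*(k:ℝ)+2)) - x^(-(α+2*(k:ℝ)+3)))
      ≤ 1 / ((x + 1) * x ^ (α + 1)) := by
  have hx0 : (0:ℝ) < x := by linarith
  set S := ∑ k ∈ range M, (x^(-(α+2*(k:ℝ)+2)) - x^(-(α+2*(k:ℝ)+3))) with hSdef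
  set h : ℕ → ℝ := fun k => x^(-(α+2*(k:ℝ)+1)) with hh
  have key : ∀ k : ℕ, (x+1) * (x^(-(α+2*(k:ℝ)+2)) - x^(-(α+2*(k:ℝ)+3)))
      = h k - h (k+1) := by
    intro k
    have c : (0:ℝ) ≤ (k:ℝ) := Nat.cast_nonneg k
    have e1 : x * x ^ (-(α+2*(k:ℝ)+2)) = x ^ (-(α+2*(k:ℝ)+1)) := by
      rw [show -(α+2*(k:ℝ)+1) = 1 + -(α+2*(k:ℝ)+2) by ring,
        Real.rpow_one_add' hx0.le (by intro hcon; nlinarith)]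
    have e2 : x * x ^ (-(α+2*(k:ℝ)+3)) = x ^ (-(α+2*(k:ℝ)+2)) := by
      rw [show -(α+2*(k:ℝ)+2) = 1 + -(α+2*(k:ℝ)+3) by ring,
        Real.rpow_one_add' hx0.le (by intro hcon; nlinarith)]
    simp only [hh]
    push_cast
    rw [show -(α+2*((k:ℝ)+1)+1) = -(α+2*(k:ℝ)+3) by ring]
    linear_combination e1 - e2
  have hS : (x+1) * S = h 0 - h M := by
    rw [hSdef, Finset.mul_sum, Finset.sum_congr rfl (fun k _ => key k),
      Finset.sum_range_sub' h]
  have hS_le : (x+1) * S ≤ x^(-(α+1)) := by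
    rw [hS]
    have h1 : (0:ℝ) ≤ h M := Real.rpow_nonneg hx0.le _
    have h2 : h 0 = x^(-(α+1)) := by simp [hh]
    linarith
  have hfin : S ≤ x^(-(α+1)) / (x+1) := by
    rw [le_div_iff₀ (by linarith : (0:ℝ) < x+1), mul_comm]
    exact hS_le
  calc S ≤ x^(-(α+1))/(x+1) := hfin
    _ = 1/((x+1)*x^(α+1)) := by
        rw [Real.rpow_neg hx0.le]
        have : (0:ℝ) < x^(α+1) := Real.rpow_pos_of_pos hx0 _
        field_simp

lemma my_per_i (α : ℝ) (hα : 0 ≤ α) (M : ℕ) (x : ℝ) (hx : 2 ≤ x) :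
    ∑ w ∈ Finset.Icc 1 (2*M),
        ((-1:ℝ)^(w-1) / (α + w)) * (x ^ (-(α + (w:ℝ))) - (x+1) ^ (-(α + (w:ℝ))))
      ≤ 1 / ((x + 1) * x ^ (α + 1)) := by
  rw [← Finset.Ico_add_one_right_eq_Icc, Finset.sum_Ico_eq_sum_range]
  rw [show 2*M+1-1 = 2*M from rfl]
  rw [my_sum_pair M (fun j => ((-1:ℝ)^((1+j)-1) / (α + (1+j:ℕ)))
    * (x ^ (-(α + ((1+j:ℕ):ℝ))) - (x+1) ^ (-(α + ((1+j:ℕ):ℝ)))))]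
  refine le_trans (Finset.sum_le_sum ?_) (my_geom α hα M x hx)
  intro k _
  have hk0 : (0:ℝ) ≤ (k:ℝ) := Nat.cast_nonneg k
  have hb := my_pair_bound (α+2*(k:ℝ)+1) x (by linarith) hx
  rw [show (α+2*(k:ℝ)+1)+1 = α+2*(k:ℝ)+2 by ring,
    show (α+2*(k:ℝ)+1)+2 = α+2*(k:ℝ)+3 by ring] at hb
  refine le_trans (le_of_eq ?_) hb
  have hk1 : ((1+2*k : ℕ) : ℝ) = 2*(k:ℝ)+1 := by push_cast; ring
  have hk2 : ((1+(2*k+1) : ℕ) : ℝ) = 2*(k:ℝ)+2 := by push_cast; ring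
  simp only [show (1+2*k)-1 = 2*k from by omega,
    show (1+(2*k+1))-1 = 2*k+1 from by omega, hk1, hk2]
  rw [Even.neg_one_pow ⟨k, by ring⟩, Odd.neg_one_pow ⟨k, by ring⟩]
  rw [show α+(2*(k:ℝ)+1) = α+2*(k:ℝ)+1 by ring,
    show α+(2*(k:ℝ)+2) = α+2*(k:ℝ)+2 by ring]
  ring

/-- for `α ≥ 0`, odd `W ≥ 3`, `N ≥ 3`,
`∑_{i=2}^{N-1} 1/((i+1)·i^{α+1})
  ≥ ∑_{w=1}^{W+1} ((-1)^{w-1}/(α+w))·(2^{-(α+w)} - N^{-(α+w)})`. -/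
theorem rightRegular_sum_lower_bound (α : ℝ) (hα : 0 ≤ α)
    (W : ℕ) (hW : 3 ≤ W) (hWodd : Odd W) (N : ℕ) (hN : 3 ≤ N) :
    ∑ w ∈ Finset.Icc 1 (W+1),
        ((-1:ℝ)^(w-1) / (α + w))
          * ((2:ℝ) ^ (-(α + w)) - (N:ℝ) ^ (-(α + w)))
      ≤ ∑ i ∈ Finset.Icc 2 (N-1), 1 / (((i:ℝ) + 1) * (i:ℝ) ^ (α + 1)) := by
  obtain ⟨m, hm⟩ := hWodd
  have hW1 : W + 1 = 2 * (m+1) := by omega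
  have step1 : ∑ w ∈ Finset.Icc 1 (W+1),
        ((-1:ℝ)^(w-1) / (α + w)) * ((2:ℝ) ^ (-(α + w)) - (N:ℝ) ^ (-(α + w)))
      = ∑ w ∈ Finset.Icc 1 (W+1), ∑ i ∈ Finset.Icc 2 (N-1),
        ((-1:ℝ)^(w-1) / (α + w))
          * ((i:ℝ) ^ (-(α + (w:ℝ))) - ((i:ℝ)+1) ^ (-(α + (w:ℝ)))) := by
    refine Finset.sum_congr rfl fun w _ => ?_
    rw [← Finset.mul_sum]
    congr 1
    have h := my_telescope (fun n : ℕ => (n:ℝ)^(-(α+(w:ℝ)))) N (by omega)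
    push_cast at h
    exact h.symm
  rw [step1, Finset.sum_comm]
  refine Finset.sum_le_sum fun i hi => ?_
  have hx : (2:ℝ) ≤ (i:ℝ) := by exact_mod_cast (Finset.mem_Icc.mp hi).1
  rw [hW1]
  exact my_per_i α hα (m+1) (i:ℝ) hx
end
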